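/- arXiv:cs/0507020 — 4 statements merged into one kernel-verified Lean document; each statement's English description precedes it below -/
import Mathlib

section
/- Quantifier elimination for bijective first-order logic: for every first-order formula φ(t̄) over σ built from bijective atomic formulas (in particular, for every ordinary first-order σ-formula), there exists a Boolean combination φ′(t̄) of bijective atomic formulas, with the same free variables t̄, that is equivalent to φ(t̄): for every bijective σ-structure S and every tuple ā of domain elements, S ⊨ φ(ā) if and only if S ⊨ φ′(ā). -/
/-!
Deep embedding of bijective first-order logic (paper: Durand–Grandjean).
A unary functional signature σ has constant symbols indexed by `C`, monadic
predicate symbols indexed by `U`, and unary function symbols indexed by `F`.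
A bijective σ-structure over domain `D` interprets constants by `cI : C → D`,
monadic predicates by `uI : U → D → Prop`, and every unary function symbol by a
permutation of `D`, `fI : F → Equiv.Perm D`.
-/

namespace PaperQE

/-- A bijective term `f_{i₁}^{ε₁} ∘ ⋯ ∘ f_{iₗ}^{εₗ}(·)` encoded as the list of
its signed function symbols (`true` = the symbol, `false` = its inverse). -/
abbrev Word (F : Type) := List (F × Bool)

/-- Evaluation of a bijective term at an element of the domain. -/
def evalWord {F : Type} {D : Type*} (fI : F → Equiv.Perm D) : Word F → D → D
  | [], x => x
  | (f, b) :: w, x => (if b then fI f else (fI f).symm) (evalWord fI w x)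

/-- Bijective atomic formulas other than cardinality statements, with free
variables among `Fin n`: `τ(xᵢ) = τ'(xⱼ)`, `τ(xᵢ) = c`, `U(τ(xᵢ))`. -/
inductive NCAtom (C U F : Type) (n : ℕ) : Type
  | eq : Word F → Fin n → Word F → Fin n → NCAtom C U F n
  | eqc : Word F → Fin n → C → NCAtom C U F n
  | pred : U → Word F → Fin n → NCAtom C U F n

/-- Satisfaction of non-cardinality bijective atoms. -/
def NCAtom.Sat {C U F : Type} {D : Type*} (cI : C → D) (uI : U → D → Prop)
    (fI : F → Equiv.Perm D) : ∀ {n : ℕ}, NCAtom C U F n → (Fin n → D) → Prop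
  | _, .eq w₁ i w₂ j, v => evalWord fI w₁ (v i) = evalWord fI w₂ (v j)
  | _, .eqc w i c, v => evalWord fI w (v i) = cI c
  | _, .pred u w i, v => uI u (evalWord fI w (v i))

/-- Boolean combinations over a type `α` of atoms. -/
inductive BC (α : Type) : Type
  | tru : BC α
  | atom : α → BC α
  | not : BC α → BC α
  | and : BC α → BC α → BC α
  | or : BC α → BC α → BC α

/-- Satisfaction of a Boolean combination, given satisfaction of atoms. -/
def BC.Sat {α : Type} (s : α → Prop) : BC α → Prop
  | .tru => True
  | .atom a => s a
  | .not φ => ¬ BC.Sat s φ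
  | .and φ ψ => BC.Sat s φ ∧ BC.Sat s ψ
  | .or φ ψ => BC.Sat s φ ∨ BC.Sat s ψ

/-- Bijective atomic formulas: non-cardinality atoms together with cardinality
statements `∃^{≥k} x Ψ(x)`, where `Ψ` is a Boolean combination of bijective
atoms in the single variable `x`. -/
inductive BAtom (C U F : Type) (n : ℕ) : Type
  | nc : NCAtom C U F n → BAtom C U F n
  | card : ℕ → BC (NCAtom C U F 1) → BAtom C U F n

/-- Satisfaction of bijective atomic formulas. A cardinality statement
`∃^{≥k} x Ψ(x)` holds when there are at least `k` values of `x` satisfying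
`Ψ`, i.e. there is an injection of `Fin k` into the set defined by `Ψ`. -/
def BAtom.Sat {C U F : Type} {D : Type*} (cI : C → D) (uI : U → D → Prop)
    (fI : F → Equiv.Perm D) : ∀ {n : ℕ}, BAtom C U F n → (Fin n → D) → Prop
  | _, .nc a, v => a.Sat cI uI fI v
  | _, .card k Ψ, _ =>
      ∃ e : Fin k ↪ D, ∀ i : Fin k, Ψ.Sat (fun a => a.Sat cI uI fI (fun _ => e i))

/-- First-order formulas built from bijective atomic formulas (the class
`FO_Bij`), with free variables among `Fin n`. -/
inductive BForm (C U F : Type) : ℕ → Type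
  | atom : ∀ {n}, BAtom C U F n → BForm C U F n
  | not : ∀ {n}, BForm C U F n → BForm C U F n
  | and : ∀ {n}, BForm C U F n → BForm C U F n → BForm C U F n
  | or : ∀ {n}, BForm C U F n → BForm C U F n → BForm C U F n
  | ex : ∀ {n}, BForm C U F (n + 1) → BForm C U F n
  | all : ∀ {n}, BForm C U F (n + 1) → BForm C U F n

/-- Tarskian satisfaction of bijective first-order formulas in a bijective
σ-structure `(D, cI, uI, fI)` under an assignment `v` of the free variables. -/
def BForm.Sat {C U F : Type} {D : Type*} (cI : C → D) (uI : U → D → Prop)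
    (fI : F → Equiv.Perm D) : ∀ {n : ℕ}, BForm C U F n → (Fin n → D) → Prop
  | _, .atom a, v => a.Sat cI uI fI v
  | _, .not φ, v => ¬ BForm.Sat cI uI fI φ v
  | _, .and φ ψ, v => BForm.Sat cI uI fI φ v ∧ BForm.Sat cI uI fI ψ v
  | _, .or φ ψ, v => BForm.Sat cI uI fI φ v ∨ BForm.Sat cI uI fI ψ v
  | _, .ex φ, v => ∃ y : D, BForm.Sat cI uI fI φ (Fin.snoc v y)
  | _, .all φ, v => ∀ y : D, BForm.Sat cI uI fI φ (Fin.snoc v y)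

end PaperQE

namespace PaperQE

section Words

variable {C U F : Type} {D : Type*}

/-- Inverse of a bijective term. -/
def winv (w : Word F) : Word F := (w.map fun p => (p.1, !p.2)).reverse

theorem evalWord_append (fI : F → Equiv.Perm D) (w w' : Word F) (x : D) :
    evalWord fI (w ++ w') x = evalWord fI w (evalWord fI w' x) := by
  induction w with
  | nil => rfl
  | cons p w ih => cases p with | mk f b => simp [evalWord, ih]

theorem evalWord_winv_left (fI : F → Equiv.Perm D) (w : Word F) (x : D) :
    evalWord fI (winv w) (evalWord fI w x) = x := by
  induction w with
  | nil => rfl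
  | cons p w ih =>
    cases p with | mk f b =>
    have : winv ((f, b) :: w) = winv w ++ [(f, !b)] := by simp [winv]
    rw [this, evalWord_append]
    cases b <;> simp [evalWord, ih]

theorem evalWord_winv_right (fI : F → Equiv.Perm D) (w : Word F) (x : D) :
    evalWord fI w (evalWord fI (winv w) x) = x := by
  induction w generalizing x with
  | nil => rfl
  | cons p w ih =>
    cases p with | mk f b =>
    have : winv ((f, b) :: w) = winv w ++ [(f, !b)] := by simp [winv]
    rw [this, evalWord_append]
    cases b <;> simp [evalWord, ih]

theorem evalWord_cancel (fI : F → Equiv.Perm D) (w : Word F) (y z : D) :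
    evalWord fI w y = z ↔ y = evalWord fI (winv w) z := by
  constructor
  · rintro rfl; rw [evalWord_winv_left]
  · rintro rfl; rw [evalWord_winv_right]

end Words

section BCUtil

variable {α β : Type}

theorem BC.sat_congr {s s' : α → Prop} (h : ∀ a, s a ↔ s' a) :
    ∀ φ : BC α, BC.Sat s φ ↔ BC.Sat s' φ
  | .tru => Iff.rfl
  | .atom a => h a
  | .not φ => by simp only [BC.Sat]; rw [BC.sat_congr h φ]
  | .and φ ψ => by simp only [BC.Sat]; rw [BC.sat_congr h φ, BC.sat_congr h ψ]
  | .or φ ψ => by simp only [BC.Sat]; rw [BC.sat_congr h φ, BC.sat_congr h ψ]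

/-- Map on atoms. -/
def BC.map (f : α → β) : BC α → BC β
  | .tru => .tru
  | .atom a => .atom (f a)
  | .not φ => .not (φ.map f)
  | .and φ ψ => .and (φ.map f) (ψ.map f)
  | .or φ ψ => .or (φ.map f) (ψ.map f)

theorem BC.sat_map (f : α → β) (s : β → Prop) :
    ∀ φ : BC α, BC.Sat s (φ.map f) ↔ BC.Sat (fun a => s (f a)) φ
  | .tru => Iff.rfl
  | .atom a => Iff.rfl
  | .not φ => by simp only [BC.map, BC.Sat]; rw [BC.sat_map f s φ]
  | .and φ ψ => by simp only [BC.map, BC.Sat]; rw [BC.sat_map f s φ, BC.sat_map f s ψ]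
  | .or φ ψ => by simp only [BC.map, BC.Sat]; rw [BC.sat_map f s φ, BC.sat_map f s ψ]

/-- Falsity. -/
def BC.fals : BC α := .not .tru

@[simp] theorem BC.sat_fals (s : α → Prop) : BC.Sat s (BC.fals (α := α)) ↔ False := by
  simp [BC.fals, BC.Sat]

/-- Finite conjunction. -/
def bigAnd : List (BC α) → BC α
  | [] => .tru
  | φ :: l => .and φ (bigAnd l)

theorem sat_bigAnd (s : α → Prop) : ∀ l : List (BC α),
    BC.Sat s (bigAnd l) ↔ ∀ φ ∈ l, BC.Sat s φ
  | [] => by simp [bigAnd, BC.Sat]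
  | φ :: l => by simp [bigAnd, BC.Sat, sat_bigAnd s l]

/-- Finite disjunction. -/
def bigOr : List (BC α) → BC α
  | [] => BC.fals
  | φ :: l => .or φ (bigOr l)

theorem sat_bigOr (s : α → Prop) : ∀ l : List (BC α),
    BC.Sat s (bigOr l) ↔ ∃ φ ∈ l, BC.Sat s φ
  | [] => by simp [bigOr, BC.Sat]
  | φ :: l => by simp [bigOr, BC.Sat, sat_bigOr s l]

/-- A literal: an atom with a sign. -/
def LitSat (s : α → Prop) (l : α × Bool) : Prop := if l.2 then s l.1 else ¬ s l.1

/-- Literal as a Boolean combination. -/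
def litBC (l : α × Bool) : BC α := if l.2 then .atom l.1 else .not (.atom l.1)

theorem sat_litBC (s : α → Prop) (l : α × Bool) :
    BC.Sat s (litBC l) ↔ LitSat s l := by
  cases l with | mk a b => cases b <;> simp [litBC, LitSat, BC.Sat]

/-- Satisfaction of a clause (conjunction of literals). -/
def ClSat (s : α → Prop) (c : List (α × Bool)) : Prop := ∀ l ∈ c, LitSat s l

/-- Satisfaction of a DNF (disjunction of clauses). -/
def DnfSat (s : α → Prop) (d : List (List (α × Bool))) : Prop := ∃ c ∈ d, ClSat s c

/-- Conjunction of two DNFs. -/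
def dAnd (d d' : List (List (α × Bool))) : List (List (α × Bool)) :=
  d.flatMap fun c => d'.map (c ++ ·)

theorem dnfSat_append (s : α → Prop) (d d' : List (List (α × Bool))) :
    DnfSat s (d ++ d') ↔ DnfSat s d ∨ DnfSat s d' := by
  simp [DnfSat, List.mem_append, or_and_right, exists_or]

theorem dnfSat_dAnd (s : α → Prop) (d d' : List (List (α × Bool))) :
    DnfSat s (dAnd d d') ↔ DnfSat s d ∧ DnfSat s d' := by
  constructor
  · rintro ⟨c, hc, hsat⟩
    simp only [dAnd, List.mem_flatMap, List.mem_map] at hc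
    obtain ⟨c₁, hc₁, c₂, hc₂, rfl⟩ := hc
    exact ⟨⟨c₁, hc₁, fun l hl => hsat l (List.mem_append_left _ hl)⟩,
      ⟨c₂, hc₂, fun l hl => hsat l (List.mem_append_right _ hl)⟩⟩
  · rintro ⟨⟨c₁, hc₁, h₁⟩, ⟨c₂, hc₂, h₂⟩⟩
    refine ⟨c₁ ++ c₂, ?_, ?_⟩
    · simp only [dAnd, List.mem_flatMap, List.mem_map]
      exact ⟨c₁, hc₁, c₂, hc₂, rfl⟩
    · intro l hl
      rcases List.mem_append.1 hl with h | h
      · exact h₁ l h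
      · exact h₂ l h

/-- DNFs of a Boolean combination and of its negation. -/
def toDNF : BC α → List (List (α × Bool)) × List (List (α × Bool))
  | .tru => ([[]], [])
  | .atom a => ([[(a, true)]], [[(a, false)]])
  | .not φ => ((toDNF φ).2, (toDNF φ).1)
  | .and φ ψ => (dAnd (toDNF φ).1 (toDNF ψ).1, (toDNF φ).2 ++ (toDNF ψ).2)
  | .or φ ψ => ((toDNF φ).1 ++ (toDNF ψ).1, dAnd (toDNF φ).2 (toDNF ψ).2)

theorem sat_toDNF (s : α → Prop) : ∀ φ : BC α,
    (BC.Sat s φ ↔ DnfSat s (toDNF φ).1) ∧ (¬ BC.Sat s φ ↔ DnfSat s (toDNF φ).2)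
  | .tru => by simp [toDNF, BC.Sat, DnfSat, ClSat]
  | .atom a => by simp [toDNF, BC.Sat, DnfSat, ClSat, LitSat]
  | .not φ => by
    obtain ⟨h1, h2⟩ := sat_toDNF s φ
    refine ⟨by simpa [toDNF, BC.Sat] using h2, ?_⟩
    simp only [toDNF, BC.Sat, not_not]
    exact h1
  | .and φ ψ => by
    obtain ⟨h1, h2⟩ := sat_toDNF s φ
    obtain ⟨h3, h4⟩ := sat_toDNF s ψ
    constructor
    · simp only [toDNF, BC.Sat, dnfSat_dAnd]
      rw [h1, h3]
    · simp only [toDNF, BC.Sat, dnfSat_append]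
      rw [← h2, ← h4]
      tauto
  | .or φ ψ => by
    obtain ⟨h1, h2⟩ := sat_toDNF s φ
    obtain ⟨h3, h4⟩ := sat_toDNF s ψ
    constructor
    · simp only [toDNF, BC.Sat, dnfSat_append]
      rw [h1, h3]
    · simp only [toDNF, BC.Sat, dnfSat_dAnd]
      rw [← h2, ← h4]
      tauto

end BCUtil

end PaperQE

namespace PaperQE

section Elim

variable {C U F : Type} {n : ℕ} {D : Type*}

/-- Substituting the term `s(x_k)` for the single variable of a monadic atom. -/
def substNC1 (s : Word F) (k : Fin n) : NCAtom C U F 1 → NCAtom C U F n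
  | .eq w _ w' _ => .eq (w ++ s) k (w' ++ s) k
  | .eqc w _ c => .eqc (w ++ s) k c
  | .pred u w _ => .pred u (w ++ s) k

theorem sat_substNC1 (cI : C → D) (uI : U → D → Prop) (fI : F → Equiv.Perm D)
    (s : Word F) (k : Fin n) (A : NCAtom C U F 1) (v : Fin n → D) :
    (substNC1 s k A).Sat cI uI fI v ↔
      A.Sat cI uI fI (fun _ => evalWord fI s (v k)) := by
  cases A <;> simp [substNC1, NCAtom.Sat, evalWord_append]

/-- The three kinds of bijective atoms over `Fin (n+1)`, as seen from the last
variable `y`: atoms not mentioning `y`, monadic atoms on `y`, and linking atoms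
`w(y) = w'(x_j)`. -/
inductive Piece (C U F : Type) (n : ℕ) : Type
  | pass : BAtom C U F n → Piece C U F n
  | mono : NCAtom C U F 1 → Piece C U F n
  | link : Word F → Word F → Fin n → Piece C U F n

def Piece.SatP (cI : C → D) (uI : U → D → Prop) (fI : F → Equiv.Perm D)
    (v : Fin n → D) (y : D) : Piece C U F n → Prop
  | .pass a => a.Sat cI uI fI v
  | .mono A => A.Sat cI uI fI (fun _ => y)
  | .link w w' j => evalWord fI w y = evalWord fI w' (v j)

def classifyAtom : BAtom C U F (n + 1) → Piece C U F n
  | .card k Ψ => .pass (.card k Ψ)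
  | .nc (.eqc w i c) =>
      if h : i = Fin.last n then .mono (.eqc w 0 c)
      else .pass (.nc (.eqc w (i.castPred h) c))
  | .nc (.pred u w i) =>
      if h : i = Fin.last n then .mono (.pred u w 0)
      else .pass (.nc (.pred u w (i.castPred h)))
  | .nc (.eq w i w' j) =>
      if h : i = Fin.last n then
        if h' : j = Fin.last n then .mono (.eq w 0 w' 0)
        else .link w w' (j.castPred h')
      else
        if h' : j = Fin.last n then .link w' w (i.castPred h)
        else .pass (.nc (.eq w (i.castPred h) w' (j.castPred h')))

theorem snoc_ne_last {v : Fin n → D} {y : D} {i : Fin (n + 1)} (h : i ≠ Fin.last n) :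
    (Fin.snoc v y : Fin (n + 1) → D) i = v (i.castPred h) := by
  obtain ⟨j, rfl⟩ := Fin.exists_castSucc_eq.2 h
  simp

theorem sat_classifyAtom (cI : C → D) (uI : U → D → Prop) (fI : F → Equiv.Perm D)
    (v : Fin n → D) (y : D) (a : BAtom C U F (n + 1)) :
    a.Sat cI uI fI (Fin.snoc v y) ↔ (classifyAtom a).SatP cI uI fI v y := by
  match a with
  | .card k Ψ => simp [classifyAtom, BAtom.Sat, Piece.SatP]
  | .nc (.eqc w i c) =>
    by_cases h : i = Fin.last n <;>
      simp [classifyAtom, h, BAtom.Sat, NCAtom.Sat, Piece.SatP, snoc_ne_last,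
        Fin.snoc_last]
  | .nc (.pred u w i) =>
    by_cases h : i = Fin.last n <;>
      simp [classifyAtom, h, BAtom.Sat, NCAtom.Sat, Piece.SatP, snoc_ne_last,
        Fin.snoc_last]
  | .nc (.eq w i w' j) =>
    by_cases h : i = Fin.last n <;> by_cases h' : j = Fin.last n <;>
      simp [classifyAtom, h, h', BAtom.Sat, NCAtom.Sat, Piece.SatP, snoc_ne_last,
        Fin.snoc_last, eq_comm]

/-- Normal form of a clause over `Fin (n+1)` atoms, as seen from the last
variable: pass-through literals, monadic literals on `y`, positive and
negative links. -/
structure NF (C U F : Type) (n : ℕ) : Type where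
  passes : List (BAtom C U F n × Bool)
  monos : List (NCAtom C U F 1 × Bool)
  plinks : List (Word F × Word F × Fin n)
  nlinks : List (Word F × Word F × Fin n)

def NF.SatAt (cI : C → D) (uI : U → D → Prop) (fI : F → Equiv.Perm D)
    (v : Fin n → D) (y : D) (nf : NF C U F n) : Prop :=
  (∀ l ∈ nf.passes, LitSat (fun a => BAtom.Sat cI uI fI a v) l) ∧
  (∀ l ∈ nf.monos, LitSat (fun A => NCAtom.Sat cI uI fI A (fun _ => y)) l) ∧
  (∀ p ∈ nf.plinks, evalWord fI p.1 y = evalWord fI p.2.1 (v p.2.2)) ∧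
  (∀ p ∈ nf.nlinks, evalWord fI p.1 y ≠ evalWord fI p.2.1 (v p.2.2))

def insertPiece (p : Piece C U F n) (b : Bool) (nf : NF C U F n) : NF C U F n :=
  match p with
  | .pass a => { nf with passes := (a, b) :: nf.passes }
  | .mono A => { nf with monos := (A, b) :: nf.monos }
  | .link w w' j =>
      if b then { nf with plinks := (w, w', j) :: nf.plinks }
      else { nf with nlinks := (w, w', j) :: nf.nlinks }

theorem sat_insertPiece (cI : C → D) (uI : U → D → Prop) (fI : F → Equiv.Perm D)
    (v : Fin n → D) (y : D) (p : Piece C U F n) (b : Bool) (nf : NF C U F n) :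
    (insertPiece p b nf).SatAt cI uI fI v y ↔
      ((if b then p.SatP cI uI fI v y else ¬ p.SatP cI uI fI v y) ∧
        nf.SatAt cI uI fI v y) := by
  cases p <;> cases b <;>
    simp [insertPiece, NF.SatAt, Piece.SatP, LitSat, List.forall_mem_cons] <;>
    tauto

def toNF : List (BAtom C U F (n + 1) × Bool) → NF C U F n
  | [] => ⟨[], [], [], []⟩
  | (a, b) :: c => insertPiece (classifyAtom a) b (toNF c)

theorem sat_toNF (cI : C → D) (uI : U → D → Prop) (fI : F → Equiv.Perm D)
    (v : Fin n → D) (y : D) :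
    ∀ c : List (BAtom C U F (n + 1) × Bool),
      ClSat (fun a => a.Sat cI uI fI (Fin.snoc v y)) c ↔
        (toNF c).SatAt cI uI fI v y
  | [] => by simp [ClSat, toNF, NF.SatAt]
  | (a, b) :: c => by
    rw [toNF, sat_insertPiece]
    have hd : LitSat (fun a => BAtom.Sat cI uI fI a (Fin.snoc v y)) (a, b) ↔
        (if b then (classifyAtom a).SatP cI uI fI v y
          else ¬ (classifyAtom a).SatP cI uI fI v y) := by
      cases b <;> simp [LitSat, sat_classifyAtom]
    rw [← hd, ← sat_toNF cI uI fI v y c]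
    simp [ClSat, List.forall_mem_cons]

end Elim

end PaperQE

namespace PaperQE

section Core

variable {C U F : Type} {n : ℕ} {D : Type*}

/-- Combinatorial core: there is an `M`-point avoiding finitely many points
`t i` iff for some finite set `σ` of indices whose values cover the `M`-points
among the `t i`, there are at least `|σ| + 1` points satisfying `M`. -/
theorem exists_avoid_iff (M : D → Prop) {m : ℕ} (t : Fin m → D) :
    (∃ y, M y ∧ ∀ i, y ≠ t i) ↔
      ∃ σ : Finset (Fin m),
        (∀ i, M (t i) → ∃ a ∈ σ, t i = t a) ∧
        ∃ e : Fin (σ.card + 1) ↪ D, ∀ k, M (e k) := by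
  classical
  constructor
  · rintro ⟨y, hy, hne⟩
    set S : Finset (Fin m) := Finset.univ.filter fun i => M (t i) with hS
    set T : Finset D := S.image t with hT
    have hsec : ∀ d ∈ T, ∃ i, i ∈ S ∧ t i = d := by
      intro d hd
      rw [hT, Finset.mem_image] at hd
      obtain ⟨i, hi, hti⟩ := hd
      exact ⟨i, hi, hti⟩
    choose f hfS hft using hsec
    set σ : Finset (Fin m) := T.attach.image (fun d => f d.1 d.2) with hσ
    have hMT : ∀ d ∈ T, M d := by
      intro d hd
      rw [hT, Finset.mem_image] at hd
      obtain ⟨i, hi, rfl⟩ := hd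
      rw [hS, Finset.mem_filter] at hi
      exact hi.2
    have hyT : y ∉ T := by
      intro hmem
      rw [hT, Finset.mem_image] at hmem
      obtain ⟨i, _, hi⟩ := hmem
      exact hne i hi.symm
    have hcard : σ.card + 1 ≤ (insert y T).card := by
      rw [Finset.card_insert_of_notMem hyT]
      have h1 : σ.card ≤ T.attach.card := Finset.card_image_le
      rw [Finset.card_attach] at h1
      omega
    refine ⟨σ, ?_, ?_⟩
    · intro i hMi
      have hiS : i ∈ S := by rw [hS, Finset.mem_filter]; exact ⟨Finset.mem_univ i, hMi⟩
      have hti : t i ∈ T := by rw [hT]; exact Finset.mem_image_of_mem t hiS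
      refine ⟨f (t i) hti, ?_, (hft _ hti).symm⟩
      rw [hσ]
      exact Finset.mem_image_of_mem _ (Finset.mem_attach _ ⟨t i, hti⟩)
    · refine ⟨(Fin.castLEEmb hcard).trans
        ((insert y T).equivFin.symm.toEmbedding.trans (Function.Embedding.subtype _)), ?_⟩
      intro k
      have hmem : ((insert y T).equivFin.symm (Fin.castLE hcard k) : D) ∈ insert y T :=
        ((insert y T).equivFin.symm (Fin.castLE hcard k)).2
      rcases Finset.mem_insert.1 hmem with h | h
      · simpa [Function.Embedding.trans, h] using (h ▸ hy : M _)
      · simpa [Function.Embedding.trans] using hMT _ h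
  · rintro ⟨σ, hcov, e, hM⟩
    by_contra h
    push_neg at h
    have hin : ∀ k, e k ∈ σ.image t := by
      intro k
      obtain ⟨i, hi⟩ := h (e k) (hM k)
      have hMi : M (t i) := hi ▸ hM k
      obtain ⟨a, ha, hta⟩ := hcov i hMi
      exact Finset.mem_image.2 ⟨a, ha, by rw [← hta, ← hi]⟩
    have h1 : (Finset.univ : Finset (Fin (σ.card + 1))).card ≤ (σ.image t).card :=
      Finset.card_le_card_of_injOn e (fun k _ => hin k) (e.injective.injOn)
    have h2 : (σ.image t).card ≤ σ.card := Finset.card_image_le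
    simp [Finset.card_univ] at h1
    omega

/-- Substituting the term `s(x_k)` into a monadic Boolean combination. -/
def monoSubstBC (M : BC (NCAtom C U F 1)) (s : Word F) (k : Fin n) :
    BC (BAtom C U F n) :=
  M.map fun A => BAtom.nc (substNC1 s k A)

theorem sat_monoSubstBC (cI : C → D) (uI : U → D → Prop) (fI : F → Equiv.Perm D)
    (M : BC (NCAtom C U F 1)) (s : Word F) (k : Fin n) (v : Fin n → D) :
    BC.Sat (fun a => BAtom.Sat cI uI fI a v) (monoSubstBC M s k) ↔
      BC.Sat (fun A => NCAtom.Sat cI uI fI A (fun _ => evalWord fI s (v k))) M := by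
  rw [monoSubstBC, BC.sat_map]
  exact BC.sat_congr
    (fun A => by simpa [BAtom.Sat] using sat_substNC1 cI uI fI s k A v) M

/-- The quantifier-free formula replacing `∃ y (M(y) ∧ ⋀ᵢ y ≠ tᵢ)`. -/
noncomputable def case3 (M : BC (NCAtom C U F 1)) (ts : List (Word F × Fin n)) :
    BC (BAtom C U F n) :=
  bigOr (((Finset.univ : Finset (Finset (Fin ts.length))).toList).map fun σ =>
    BC.and
      (bigAnd ((List.finRange ts.length).map fun i =>
        BC.or (BC.not (monoSubstBC M (ts.get i).1 (ts.get i).2))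
          (bigOr (σ.toList.map fun a =>
            BC.atom (.nc (.eq (ts.get i).1 (ts.get i).2 (ts.get a).1 (ts.get a).2))))))
      (BC.atom (.card (σ.card + 1) M)))

theorem sat_case3 (cI : C → D) (uI : U → D → Prop) (fI : F → Equiv.Perm D)
    (v : Fin n → D) (M : BC (NCAtom C U F 1)) (ts : List (Word F × Fin n)) :
    BC.Sat (fun a => BAtom.Sat cI uI fI a v) (case3 M ts) ↔
      ∃ σ : Finset (Fin ts.length),
        (∀ i : Fin ts.length,
            BC.Sat (fun A => NCAtom.Sat cI uI fI A
              (fun _ => evalWord fI (ts.get i).1 (v (ts.get i).2))) M →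
            ∃ a ∈ σ, evalWord fI (ts.get i).1 (v (ts.get i).2) =
              evalWord fI (ts.get a).1 (v (ts.get a).2)) ∧
        ∃ e : Fin (σ.card + 1) ↪ D,
          ∀ k, BC.Sat (fun A => NCAtom.Sat cI uI fI A (fun _ => e k)) M := by
  classical
  rw [case3, sat_bigOr]
  simp only [List.mem_map, Finset.mem_toList, Finset.mem_univ, true_and]
  constructor
  · rintro ⟨φ, ⟨σ, rfl⟩, hsat⟩
    obtain ⟨h1, h2⟩ := hsat
    refine ⟨σ, ?_, ?_⟩
    · intro i hMi
      rw [sat_bigAnd] at h1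
      have := h1 _ (List.mem_map_of_mem (List.mem_finRange i))
      rcases this with hnot | hor
      · exact absurd ((sat_monoSubstBC cI uI fI M _ _ v).2 hMi) hnot
      · rw [sat_bigOr] at hor
        obtain ⟨ψ, hψ, hs⟩ := hor
        rw [List.mem_map] at hψ
        obtain ⟨a, ha, rfl⟩ := hψ
        exact ⟨a, Finset.mem_toList.1 ha, hs⟩
    · exact h2
  · rintro ⟨σ, hcov, hcard⟩
    refine ⟨_, ⟨σ, rfl⟩, ?_, ?_⟩
    · rw [sat_bigAnd]
      intro φ hφ
      rw [List.mem_map] at hφ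
      obtain ⟨i, _, rfl⟩ := hφ
      by_cases hMi : BC.Sat (fun A => NCAtom.Sat cI uI fI A
          (fun _ => evalWord fI (ts.get i).1 (v (ts.get i).2))) M
      · right
        rw [sat_bigOr]
        obtain ⟨a, ha, heq⟩ := hcov i hMi
        exact ⟨_, List.mem_map_of_mem (Finset.mem_toList.2 ha), heq⟩
      · left
        rw [BC.Sat]  -- not
        rw [sat_monoSubstBC]
        exact hMi
    · exact hcard

/-- Quantifier elimination on a normal-form clause. -/
noncomputable def NF.elim (nf : NF C U F n) : BC (BAtom C U F n) :=
  BC.and (bigAnd (nf.passes.map litBC))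
    (match nf.plinks with
     | (w, w', j) :: rest =>
        BC.and
          (bigAnd (nf.monos.map fun l =>
            litBC (BAtom.nc (substNC1 (winv w ++ w') j l.1), l.2)))
          (BC.and
            (bigAnd (rest.map fun p =>
              BC.atom (.nc (.eq (p.1 ++ (winv w ++ w')) j p.2.1 p.2.2))))
            (bigAnd (nf.nlinks.map fun p =>
              BC.not (BC.atom (.nc (.eq (p.1 ++ (winv w ++ w')) j p.2.1 p.2.2))))))
     | [] =>
        case3 (bigAnd (nf.monos.map litBC))
          (nf.nlinks.map fun p => (winv p.1 ++ p.2.1, p.2.2)))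

theorem list_forall_get {α : Type*} (l : List α) (P : α → Prop) :
    (∀ q ∈ l, P q) ↔ ∀ i : Fin l.length, P (l.get i) := by
  constructor
  · intro h i
    exact h _ (l.get_mem i)
  · intro h q hq
    obtain ⟨i, rfl⟩ := List.mem_iff_get.1 hq
    exact h i

theorem sat_elim (cI : C → D) (uI : U → D → Prop) (fI : F → Equiv.Perm D)
    (v : Fin n → D) (nf : NF C U F n) :
    (∃ y, nf.SatAt cI uI fI v y) ↔
      BC.Sat (fun a => BAtom.Sat cI uI fI a v) nf.elim := by
  obtain ⟨ps, ms, pls, nls⟩ := nf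
  cases pls with
  | cons hd rest =>
    obtain ⟨w, w', j⟩ := hd
    set s0 : Word F := winv w ++ w' with hs0
    set y₀ : D := evalWord fI s0 (v j) with hy₀
    have hkey : ∀ y : D, evalWord fI w y = evalWord fI w' (v j) ↔ y = y₀ := by
      intro y
      rw [evalWord_cancel, hy₀, hs0, evalWord_append]
    have hmono : ∀ l : NCAtom C U F 1 × Bool,
        LitSat (fun a => BAtom.Sat cI uI fI a v)
          (BAtom.nc (substNC1 s0 j l.1), l.2) ↔
        LitSat (fun A => NCAtom.Sat cI uI fI A (fun _ => y₀)) l := by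
      rintro ⟨A, b⟩
      have h := sat_substNC1 cI uI fI s0 j A v
      cases b <;> simp_all [LitSat, BAtom.Sat]
    have hlink : ∀ p : Word F × Word F × Fin n,
        BAtom.Sat cI uI fI (BAtom.nc (NCAtom.eq (p.1 ++ s0) j p.2.1 p.2.2)) v ↔
        evalWord fI p.1 y₀ = evalWord fI p.2.1 (v p.2.2) := by
      intro p
      simp [BAtom.Sat, NCAtom.Sat, evalWord_append, hy₀]
    show (∃ y, NF.SatAt cI uI fI v y ⟨ps, ms, (w, w', j) :: rest, nls⟩) ↔
      BC.Sat (fun a => BAtom.Sat cI uI fI a v)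
        (BC.and (bigAnd (ps.map litBC))
          (BC.and (bigAnd (ms.map fun l =>
              litBC (BAtom.nc (substNC1 s0 j l.1), l.2)))
            (BC.and
              (bigAnd (rest.map fun p =>
                BC.atom (.nc (.eq (p.1 ++ s0) j p.2.1 p.2.2))))
              (bigAnd (nls.map fun p =>
                BC.not (BC.atom (.nc (.eq (p.1 ++ s0) j p.2.1 p.2.2))))))))
    simp only [BC.Sat, sat_bigAnd, List.forall_mem_map, sat_litBC, NF.SatAt]
    constructor
    · rintro ⟨y, h1, h2, h3, h4⟩
      have hy : y = y₀ := (hkey y).1 (h3 _ List.mem_cons_self)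
      subst hy
      refine ⟨h1, ?_, ?_, ?_⟩
      · intro l hl
        exact (hmono l).2 (h2 l hl)
      · intro p hp
        exact (hlink p).2 (h3 p (List.mem_cons_of_mem _ hp))
      · intro p hp
        rw [hlink p]
        exact h4 p hp
    · rintro ⟨h1, h2, h3, h4⟩
      refine ⟨y₀, h1, ?_, ?_, ?_⟩
      · intro l hl
        exact (hmono l).1 (h2 l hl)
      · intro p hp
        rcases List.mem_cons.1 hp with rfl | hp
        · exact (hkey y₀).2 rfl
        · exact (hlink p).1 (h3 p hp)
      · intro p hp
        have h := h4 p hp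
        rw [hlink p] at h
        exact h
  | nil =>
    have hLHS : (∃ y, NF.SatAt cI uI fI v y ⟨ps, ms, [], nls⟩) ↔
        ((∀ l ∈ ps, LitSat (fun a => BAtom.Sat cI uI fI a v) l) ∧
          ∃ y, (BC.Sat (fun A => NCAtom.Sat cI uI fI A (fun _ => y))
                  (bigAnd (ms.map litBC))) ∧
            ∀ i : Fin (nls.map fun p => ((winv p.1 ++ p.2.1 : Word F), p.2.2)).length,
              y ≠ evalWord fI
                (((nls.map fun p => ((winv p.1 ++ p.2.1 : Word F), p.2.2)).get i).1)
                (v (((nls.map fun p => ((winv p.1 ++ p.2.1 : Word F), p.2.2)).get i).2))) := by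
      simp only [NF.SatAt, List.not_mem_nil, false_implies, implies_true, true_and]
      rw [exists_and_left]
      apply and_congr Iff.rfl
      apply exists_congr
      intro y
      apply and_congr
      · rw [sat_bigAnd]
        simp only [List.forall_mem_map, sat_litBC]
      · rw [← list_forall_get (nls.map fun p => ((winv p.1 ++ p.2.1 : Word F), p.2.2))
          (fun q => y ≠ evalWord fI q.1 (v q.2))]
        simp only [List.forall_mem_map]
        apply forall_congr'
        intro p
        apply imp_congr Iff.rfl
        rw [evalWord_append]
        exact not_congr (evalWord_cancel fI p.1 y _)
    rw [hLHS]
    show _ ↔ BC.Sat (fun a => BAtom.Sat cI uI fI a v)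
      (BC.and (bigAnd (ps.map litBC))
        (case3 (bigAnd (ms.map litBC))
          (nls.map fun p => ((winv p.1 ++ p.2.1 : Word F), p.2.2))))
    rw [show BC.Sat (fun a => BAtom.Sat cI uI fI a v)
        (BC.and (bigAnd (ps.map litBC))
          (case3 (bigAnd (ms.map litBC))
            (nls.map fun p => ((winv p.1 ++ p.2.1 : Word F), p.2.2)))) =
      (BC.Sat (fun a => BAtom.Sat cI uI fI a v) (bigAnd (ps.map litBC)) ∧
        BC.Sat (fun a => BAtom.Sat cI uI fI a v)
          (case3 (bigAnd (ms.map litBC))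
            (nls.map fun p => ((winv p.1 ++ p.2.1 : Word F), p.2.2)))) from rfl]
    apply and_congr
    · rw [sat_bigAnd]
      simp only [List.forall_mem_map, sat_litBC]
    · rw [sat_case3]
      exact (exists_avoid_iff
        (fun z => BC.Sat (fun A => NCAtom.Sat cI uI fI A (fun _ => z))
          (bigAnd (ms.map litBC)))
        (fun i => evalWord fI
          (((nls.map fun p => ((winv p.1 ++ p.2.1 : Word F), p.2.2)).get i).1)
          (v (((nls.map fun p => ((winv p.1 ++ p.2.1 : Word F), p.2.2)).get i).2))))

end Core

end PaperQE

namespace PaperQE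

section Final

variable {C U F : Type} {n : ℕ} {D : Type*}

noncomputable def elimClause (c : List (BAtom C U F (n + 1) × Bool)) :
    BC (BAtom C U F n) :=
  (toNF c).elim

theorem sat_elimClause (cI : C → D) (uI : U → D → Prop) (fI : F → Equiv.Perm D)
    (v : Fin n → D) (c : List (BAtom C U F (n + 1) × Bool)) :
    (∃ y, ClSat (fun a => a.Sat cI uI fI (Fin.snoc v y)) c) ↔
      BC.Sat (fun a => BAtom.Sat cI uI fI a v) (elimClause c) := by
  rw [elimClause, ← sat_elim]
  exact exists_congr fun y => sat_toNF cI uI fI v y c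

/-- Eliminating an existential quantifier from a Boolean combination. -/
noncomputable def elimEx (ψ : BC (BAtom C U F (n + 1))) : BC (BAtom C U F n) :=
  bigOr ((toDNF ψ).1.map elimClause)

theorem sat_elimEx (cI : C → D) (uI : U → D → Prop) (fI : F → Equiv.Perm D)
    (v : Fin n → D) (ψ : BC (BAtom C U F (n + 1))) :
    (∃ y, BC.Sat (fun a => BAtom.Sat cI uI fI a (Fin.snoc v y)) ψ) ↔
      BC.Sat (fun a => BAtom.Sat cI uI fI a v) (elimEx ψ) := by
  rw [elimEx, sat_bigOr]
  simp only [List.mem_map, exists_exists_and_eq_and]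
  constructor
  · rintro ⟨y, hy⟩
    rw [(sat_toDNF _ ψ).1] at hy
    obtain ⟨c, hc, hsat⟩ := hy
    exact ⟨c, hc, (sat_elimClause cI uI fI v c).1 ⟨y, hsat⟩⟩
  · rintro ⟨c, hc, hsat⟩
    obtain ⟨y, hy⟩ := (sat_elimClause cI uI fI v c).2 hsat
    refine ⟨y, ?_⟩
    rw [(sat_toDNF _ ψ).1]
    exact ⟨c, hc, hy⟩

/-- Eliminating a universal quantifier from a Boolean combination. -/
noncomputable def elimAll (ψ : BC (BAtom C U F (n + 1))) : BC (BAtom C U F n) :=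
  BC.not (bigOr ((toDNF ψ).2.map elimClause))

theorem sat_elimAll (cI : C → D) (uI : U → D → Prop) (fI : F → Equiv.Perm D)
    (v : Fin n → D) (ψ : BC (BAtom C U F (n + 1))) :
    (∀ y, BC.Sat (fun a => BAtom.Sat cI uI fI a (Fin.snoc v y)) ψ) ↔
      BC.Sat (fun a => BAtom.Sat cI uI fI a v) (elimAll ψ) := by
  classical
  rw [elimAll]
  show _ ↔ ¬ BC.Sat (fun a => BAtom.Sat cI uI fI a v)
    (bigOr ((toDNF ψ).2.map elimClause))
  rw [sat_bigOr]
  simp only [List.mem_map, exists_exists_and_eq_and]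
  rw [← not_iff_not, not_forall, not_not]
  constructor
  · rintro ⟨y, hy⟩
    rw [(sat_toDNF _ ψ).2] at hy
    obtain ⟨c, hc, hsat⟩ := hy
    exact ⟨c, hc, (sat_elimClause cI uI fI v c).1 ⟨y, hsat⟩⟩
  · rintro ⟨c, hc, hsat⟩
    obtain ⟨y, hy⟩ := (sat_elimClause cI uI fI v c).2 hsat
    refine ⟨y, ?_⟩
    rw [(sat_toDNF (fun a => BAtom.Sat cI uI fI a (Fin.snoc v y)) ψ).2]
    exact ⟨c, hc, hy⟩

end Final

end PaperQE





open PaperQE in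
/-- Quantifier elimination for bijective first-order logic,
Theorem 2 of the paper. For every first-order formula `φ(t̄)` over a unary
functional signature `σ` (finitely many constant symbols `C`, monadic
predicate symbols `U`, unary function symbols `F`) built from bijective atomic
formulas, there is a Boolean combination `ψ(t̄)` of bijective atomic formulas
with the same free variables which is equivalent to `φ(t̄)`: for every
bijective σ-structure `(D, cI, uI, fI)` (each function symbol interpreted as a
permutation of `D`) and every tuple `v` of domain elements, `φ` holds at `v`
iff `ψ` holds at `v`. -/
theorem quantifier_elimination_FOBij
    {C U F : Type} [Fintype C] [Fintype U] [Fintype F] {n : ℕ}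
    (φ : BForm C U F n) :
    ∃ ψ : BC (BAtom C U F n),
      ∀ (D : Type*) (cI : C → D) (uI : U → D → Prop) (fI : F → Equiv.Perm D)
        (v : Fin n → D),
        φ.Sat cI uI fI v ↔ ψ.Sat (fun a => a.Sat cI uI fI v) := by
  induction φ with
  | atom a =>
    exact ⟨BC.atom a, fun D cI uI fI v => Iff.rfl⟩
  | not φ ih =>
    obtain ⟨ψ, h⟩ := ih
    exact ⟨BC.not ψ, fun D cI uI fI v => by
      simp only [BForm.Sat, BC.Sat]; rw [h]⟩
  | and φ₁ φ₂ ih₁ ih₂ =>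
    obtain ⟨ψ₁, h₁⟩ := ih₁
    obtain ⟨ψ₂, h₂⟩ := ih₂
    exact ⟨BC.and ψ₁ ψ₂, fun D cI uI fI v => by
      simp only [BForm.Sat, BC.Sat]; rw [h₁, h₂]⟩
  | or φ₁ φ₂ ih₁ ih₂ =>
    obtain ⟨ψ₁, h₁⟩ := ih₁
    obtain ⟨ψ₂, h₂⟩ := ih₂
    exact ⟨BC.or ψ₁ ψ₂, fun D cI uI fI v => by
      simp only [BForm.Sat, BC.Sat]; rw [h₁, h₂]⟩
  | ex φ ih =>
    obtain ⟨ψ, h⟩ := ih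
    refine ⟨elimEx ψ, fun D cI uI fI v => ?_⟩
    rw [show BForm.Sat cI uI fI (BForm.ex φ) v =
      (∃ y, BForm.Sat cI uI fI φ (Fin.snoc v y)) from rfl]
    rw [← sat_elimEx]
    exact exists_congr fun y => h D cI uI fI (Fin.snoc v y)
  | all φ ih =>
    obtain ⟨ψ, h⟩ := ih
    refine ⟨elimAll ψ, fun D cI uI fI v => ?_⟩
    rw [show BForm.Sat cI uI fI (BForm.all φ) v =
      (∀ y, BForm.Sat cI uI fI φ (Fin.snoc v y)) from rfl]
    rw [← sat_elimAll]
    exact forall_congr' fun y => h D cI uI fI (Fin.snoc v y)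
end

section
/- Quantifier elimination for sentences: every first-order σ-sentence φ (a formula without free variables, built from bijective atomic formulas) is equivalent over bijective σ-structures to a Boolean combination of cardinality statements; i.e., there exists a Boolean combination φ′ of sentences of the form ∃^{≥k} x Ψ(x), with each Ψ a Boolean combination of bijective atoms in the single variable x, such that for every bijective σ-structure S, S ⊨ φ if and only if S ⊨ φ′. -/
namespace QEProof
open PaperQE

variable {C U F : Type}

/-! ### Words -/

def invWord (w : Word F) : Word F := (w.map (fun p => (p.1, !p.2))).reverse

section Words
variable {D : Type*} (fI : F → Equiv.Perm D)

lemma evalWord_append (w₁ w₂ : Word F) (x : D) :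
    evalWord fI (w₁ ++ w₂) x = evalWord fI w₁ (evalWord fI w₂ x) := by
  induction w₁ with
  | nil => rfl
  | cons p w ih => obtain ⟨f, b⟩ := p; simp [evalWord, ih]

lemma invWord_cons (p : F × Bool) (w : Word F) :
    invWord (p :: w) = invWord w ++ [(p.1, !p.2)] := by
  simp [invWord]

lemma evalWord_invWord_left (w : Word F) (x : D) :
    evalWord fI (invWord w) (evalWord fI w x) = x := by
  induction w generalizing x with
  | nil => rfl
  | cons p w ih =>
    obtain ⟨f, b⟩ := p
    rw [invWord_cons, evalWord_append]
    cases b <;> simp [evalWord, ih]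

lemma evalWord_invWord_right (w : Word F) (x : D) :
    evalWord fI w (evalWord fI (invWord w) x) = x := by
  induction w generalizing x with
  | nil => rfl
  | cons p w ih =>
    obtain ⟨f, b⟩ := p
    rw [invWord_cons, evalWord_append]
    cases b <;> simp [evalWord, ih]

lemma eq_evalWord_iff (w₁ w₂ : Word F) (y z : D) :
    evalWord fI w₁ y = evalWord fI w₂ z ↔ y = evalWord fI (invWord w₁ ++ w₂) z := by
  rw [evalWord_append]
  constructor
  · intro h
    have := congrArg (evalWord fI (invWord w₁)) h
    rwa [evalWord_invWord_left] at this
  · intro h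
    rw [h, evalWord_invWord_right]

end Words

/-! ### BC utilities -/

def bcMap {α β : Type} (g : α → β) : BC α → BC β
  | .tru => .tru
  | .atom a => .atom (g a)
  | .not φ => .not (bcMap g φ)
  | .and φ ψ => .and (bcMap g φ) (bcMap g ψ)
  | .or φ ψ => .or (bcMap g φ) (bcMap g ψ)

lemma bcMap_sat {α β : Type} (g : α → β) (s : β → Prop) (φ : BC α) :
    (bcMap g φ).Sat s ↔ φ.Sat (fun a => s (g a)) := by
  induction φ <;> simp [bcMap, BC.Sat, *]

lemma bc_sat_congr {α : Type} {s s' : α → Prop} (h : ∀ a, s a ↔ s' a) (φ : BC α) :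
    φ.Sat s ↔ φ.Sat s' := by
  induction φ <;> simp [BC.Sat, h, *]

def bigAnd {α : Type} : List (BC α) → BC α
  | [] => .tru
  | φ :: l => .and φ (bigAnd l)

lemma bigAnd_sat {α : Type} (s : α → Prop) (l : List (BC α)) :
    (bigAnd l).Sat s ↔ ∀ φ ∈ l, φ.Sat s := by
  induction l with
  | nil => simp [bigAnd, BC.Sat]
  | cons φ l ih => simp [bigAnd, BC.Sat, ih]

def bigOr {α : Type} : List (BC α) → BC α
  | [] => .not .tru
  | φ :: l => .or φ (bigOr l)

lemma bigOr_sat {α : Type} (s : α → Prop) (l : List (BC α)) :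
    (bigOr l).Sat s ↔ ∃ φ ∈ l, φ.Sat s := by
  induction l with
  | nil => simp [bigOr, BC.Sat]
  | cons φ l ih => simp [bigOr, BC.Sat, ih]

def litToBC {α : Type} (p : α × Bool) : BC α := cond p.2 (.atom p.1) (.not (.atom p.1))

def litSat {α : Type} (s : α → Prop) (p : α × Bool) : Prop := if p.2 then s p.1 else ¬ s p.1

lemma litToBC_sat {α : Type} (s : α → Prop) (p : α × Bool) :
    (litToBC p).Sat s ↔ litSat s p := by
  obtain ⟨a, b⟩ := p; cases b <;> simp [litToBC, litSat, BC.Sat]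

def conjSat {α : Type} (s : α → Prop) (L : List (α × Bool)) : Prop := ∀ p ∈ L, litSat s p

/-! ### DNF -/

def dnf {α : Type} : Bool → BC α → List (List (α × Bool))
  | b, .tru => if b then [[]] else []
  | b, .atom a => [[(a, b)]]
  | b, .not φ => dnf (!b) φ
  | true, .and φ ψ => (dnf true φ).flatMap (fun c₁ => (dnf true ψ).map (c₁ ++ ·))
  | false, .and φ ψ => dnf false φ ++ dnf false ψ
  | true, .or φ ψ => dnf true φ ++ dnf true ψ
  | false, .or φ ψ => (dnf false φ).flatMap (fun c₁ => (dnf false ψ).map (c₁ ++ ·))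

lemma dnf_sat {α : Type} (s : α → Prop) (φ : BC α) (b : Bool) :
    (∃ c ∈ dnf b φ, conjSat s c) ↔ (if b then φ.Sat s else ¬ φ.Sat s) := by
  induction φ generalizing b with
  | tru => cases b <;> simp [dnf, conjSat, BC.Sat]
  | atom a => cases b <;> simp [dnf, conjSat, litSat, BC.Sat]
  | not φ ih =>
    have := ih (!b)
    cases b <;> simpa [dnf, BC.Sat, not_not] using this
  | and φ ψ ihφ ihψ =>
    cases b with
    | true =>
      have h1 := ihφ true; have h2 := ihψ true
      rw [if_pos rfl] at h1 h2
      rw [if_pos rfl]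
      simp only [dnf, BC.Sat, List.mem_flatMap, List.mem_map]
      constructor
      · rintro ⟨c, ⟨c₁, hc₁, c₂, hc₂, rfl⟩, hc⟩
        rw [← h1, ← h2]
        exact ⟨⟨c₁, hc₁, fun p hp => hc p (by simp [hp])⟩,
               ⟨c₂, hc₂, fun p hp => hc p (by simp [hp])⟩⟩
      · rintro ⟨hφ, hψ⟩
        rw [← h1] at hφ; rw [← h2] at hψ
        obtain ⟨c₁, hc₁, h₁⟩ := hφ; obtain ⟨c₂, hc₂, h₂⟩ := hψ
        refine ⟨c₁ ++ c₂, ⟨c₁, hc₁, c₂, hc₂, rfl⟩, fun p hp => ?_⟩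
        rcases List.mem_append.1 hp with h | h
        · exact h₁ p h
        · exact h₂ p h
    | false =>
      have h1 := ihφ false; have h2 := ihψ false
      rw [if_neg Bool.false_ne_true] at h1 h2
      rw [if_neg Bool.false_ne_true]
      simp only [dnf, BC.Sat, List.mem_append]
      rw [not_and_or]
      constructor
      · rintro ⟨c, h | h, hc⟩
        · exact Or.inl (h1.1 ⟨c, h, hc⟩)
        · exact Or.inr (h2.1 ⟨c, h, hc⟩)
      · rintro (h | h)
        · obtain ⟨c, hc, h⟩ := h1.2 h; exact ⟨c, Or.inl hc, h⟩
        · obtain ⟨c, hc, h⟩ := h2.2 h; exact ⟨c, Or.inr hc, h⟩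
  | or φ ψ ihφ ihψ =>
    cases b with
    | true =>
      have h1 := ihφ true; have h2 := ihψ true
      rw [if_pos rfl] at h1 h2
      rw [if_pos rfl]
      simp only [dnf, BC.Sat, List.mem_append]
      constructor
      · rintro ⟨c, h | h, hc⟩
        · exact Or.inl (h1.1 ⟨c, h, hc⟩)
        · exact Or.inr (h2.1 ⟨c, h, hc⟩)
      · rintro (h | h)
        · obtain ⟨c, hc, h⟩ := h1.2 h; exact ⟨c, Or.inl hc, h⟩
        · obtain ⟨c, hc, h⟩ := h2.2 h; exact ⟨c, Or.inr hc, h⟩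
    | false =>
      have h1 := ihφ false; have h2 := ihψ false
      rw [if_neg Bool.false_ne_true] at h1 h2
      rw [if_neg Bool.false_ne_true]
      simp only [dnf, BC.Sat, List.mem_flatMap, List.mem_map]
      rw [not_or]
      constructor
      · rintro ⟨c, ⟨c₁, hc₁, c₂, hc₂, rfl⟩, hc⟩
        rw [← h1, ← h2]
        exact ⟨⟨c₁, hc₁, fun p hp => hc p (by simp [hp])⟩,
               ⟨c₂, hc₂, fun p hp => hc p (by simp [hp])⟩⟩
      · rintro ⟨hφ, hψ⟩
        rw [← h1] at hφ; rw [← h2] at hψ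
        obtain ⟨c₁, hc₁, h₁⟩ := hφ; obtain ⟨c₂, hc₂, h₂⟩ := hψ
        refine ⟨c₁ ++ c₂, ⟨c₁, hc₁, c₂, hc₂, rfl⟩, fun p hp => ?_⟩
        rcases List.mem_append.1 hp with h | h
        · exact h₁ p h
        · exact h₂ p h

end QEProof
namespace QEProof
open PaperQE

variable {C U F : Type} {n : ℕ}

/-! ### Classification of literals over `n+1` variables -/

inductive LKind (C U F : Type) (n : ℕ) : Type
  | lower : BAtom C U F n → Bool → LKind C U F n
  | unary : NCAtom C U F 1 → Bool → LKind C U F n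
  | avoid : Word F → Fin n → LKind C U F n
  | pos : Word F → Fin n → LKind C U F n

def classify : BAtom C U F (n + 1) × Bool → LKind C U F n
  | (.nc (.eq w₁ i w₂ j), s) =>
    if hi : i = Fin.last n then
      if hj : j = Fin.last n then .unary (.eq w₁ 0 w₂ 0) s
      else
        if s then .pos (invWord w₁ ++ w₂) (j.castPred hj)
        else .avoid (invWord w₁ ++ w₂) (j.castPred hj)
    else
      if hj : j = Fin.last n then
        if s then .pos (invWord w₂ ++ w₁) (i.castPred hi)
        else .avoid (invWord w₂ ++ w₁) (i.castPred hi)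
      else .lower (.nc (.eq w₁ (i.castPred hi) w₂ (j.castPred hj))) s
  | (.nc (.eqc w i c), s) =>
    if hi : i = Fin.last n then .unary (.eqc w 0 c) s
    else .lower (.nc (.eqc w (i.castPred hi) c)) s
  | (.nc (.pred u w i), s) =>
    if hi : i = Fin.last n then .unary (.pred u w 0) s
    else .lower (.nc (.pred u w (i.castPred hi))) s
  | (.card k Ψ, s) => .lower (.card k Ψ) s

section Semantics
variable {D : Type*} (cI : C → D) (uI : U → D → Prop) (fI : F → Equiv.Perm D)

lemma snoc_ne_last (v : Fin n → D) (y : D) {i : Fin (n + 1)} (hi : i ≠ Fin.last n) :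
    (Fin.snoc v y : Fin (n + 1) → D) i = v (i.castPred hi) := by
  conv_lhs => rw [← Fin.castSucc_castPred i hi]
  rw [Fin.snoc_castSucc]

/-- The workhorse: satisfaction of a literal over `n+1` variables, according to
its classification. -/
lemma classify_sat (lit : BAtom C U F (n + 1) × Bool) (v : Fin n → D) (y : D) :
    litSat (fun a : BAtom C U F (n + 1) => a.Sat cI uI fI (Fin.snoc v y)) lit ↔
      (match classify lit with
        | .lower b s => litSat (fun a : BAtom C U F n => a.Sat cI uI fI v) (b, s)
        | .unary a s => litSat (fun a : NCAtom C U F 1 => a.Sat cI uI fI (fun _ => y)) (a, s)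
        | .avoid u j => y ≠ evalWord fI u (v j)
        | .pos u j => y = evalWord fI u (v j)) := by
  obtain ⟨a, s⟩ := lit
  cases a with
  | card k Ψ =>
    cases s <;> simp [classify, litSat, BAtom.Sat]
  | nc a =>
    cases a with
    | eq w₁ i w₂ j =>
      by_cases hi : i = Fin.last n <;> by_cases hj : j = Fin.last n
      · subst hi; subst hj
        cases s <;>
          simp [classify, litSat, BAtom.Sat, NCAtom.Sat, Fin.snoc_last]
      · subst hi
        have key : evalWord fI w₁ y = evalWord fI w₂ (v (j.castPred hj)) ↔
            y = evalWord fI (invWord w₁ ++ w₂) (v (j.castPred hj)) :=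
          eq_evalWord_iff fI w₁ w₂ y _
        cases s <;>
          simp [classify, hj, litSat, BAtom.Sat, NCAtom.Sat, Fin.snoc_last,
            snoc_ne_last v y hj, key]
      · subst hj
        have key : evalWord fI w₁ (v (i.castPred hi)) = evalWord fI w₂ y ↔
            y = evalWord fI (invWord w₂ ++ w₁) (v (i.castPred hi)) := by
          rw [eq_comm, eq_evalWord_iff fI w₂ w₁ y _]
        cases s <;>
          simp [classify, hi, litSat, BAtom.Sat, NCAtom.Sat, Fin.snoc_last,
            snoc_ne_last v y hi, key]
      · cases s <;>
          simp [classify, hi, hj, litSat, BAtom.Sat, NCAtom.Sat,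
            snoc_ne_last v y hi, snoc_ne_last v y hj]
    | eqc w i c =>
      by_cases hi : i = Fin.last n
      · subst hi
        cases s <;>
          simp [classify, litSat, BAtom.Sat, NCAtom.Sat, Fin.snoc_last]
      · cases s <;>
          simp [classify, hi, litSat, BAtom.Sat, NCAtom.Sat, snoc_ne_last v y hi]
    | pred u w i =>
      by_cases hi : i = Fin.last n
      · subst hi
        cases s <;>
          simp [classify, litSat, BAtom.Sat, NCAtom.Sat, Fin.snoc_last]
      · cases s <;>
          simp [classify, hi, litSat, BAtom.Sat, NCAtom.Sat, snoc_ne_last v y hi]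

end Semantics

end QEProof
namespace QEProof
open PaperQE

/-! ### The counting lemma -/

lemma forall_mem_get {α : Type*} (l : List α) (P : α → Prop) :
    (∀ x ∈ l, P x) ↔ ∀ j : Fin l.length, P (l.get j) := by
  constructor
  · intro h j; exact h _ (l.get_mem j)
  · intro h x hx
    obtain ⟨j, rfl⟩ := List.mem_iff_get.1 hx
    exact h j

lemma count_lemma {D : Type*} (S : Set D) {t : ℕ} (a : Fin t → D) :
    (∃ y, y ∈ S ∧ ∀ j, y ≠ a j) ↔
      ∃ T : Finset (Fin t),
        ((∀ j ∈ T, a j ∈ S) ∧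
         (∀ j ∈ T, ∀ j' ∈ T, j ≠ j' → a j ≠ a j') ∧
         (∀ j, j ∉ T → a j ∉ S ∨ ∃ j' ∈ T, a j = a j')) ∧
        ∃ e : Fin (T.card + 1) ↪ D, ∀ i, e i ∈ S := by
  classical
  constructor
  · rintro ⟨y, hyS, hy⟩
    set T : Finset (Fin t) :=
      Finset.univ.filter (fun j => a j ∈ S ∧ ∀ j' < j, a j' ≠ a j) with hTdef
    have hT : ∀ j, j ∈ T ↔ a j ∈ S ∧ ∀ j' < j, a j' ≠ a j := by
      intro j; simp [hTdef]
    have hinj : ∀ j ∈ T, ∀ j' ∈ T, j ≠ j' → a j ≠ a j' := by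
      intro j hj j' hj' hne heq
      rcases lt_or_gt_of_ne hne with h | h
      · exact ((hT j').1 hj').2 j h heq
      · exact ((hT j).1 hj).2 j' h heq.symm
    have key : ∀ m : ℕ, ∀ j : Fin t, j.1 ≤ m → a j ∈ S → ∃ j' ∈ T, a j = a j' := by
      intro m
      induction m with
      | zero =>
        intro j hjm hjS
        by_cases hj : j ∈ T
        · exact ⟨j, hj, rfl⟩
        · rw [hT] at hj
          push_neg at hj
          obtain ⟨k, hk, hke⟩ := hj hjS
          exact absurd (Fin.lt_def.1 hk) (by omega)
      | succ m ih =>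
        intro j hjm hjS
        by_cases hj : j ∈ T
        · exact ⟨j, hj, rfl⟩
        · rw [hT] at hj
          push_neg at hj
          obtain ⟨k, hk, hke⟩ := hj hjS
          have hkS : a k ∈ S := hke ▸ hjS
          obtain ⟨j', hj', h⟩ := ih k (by have := Fin.lt_def.1 hk; omega) hkS
          exact ⟨j', hj', by rw [← hke, h]⟩
    refine ⟨T, ⟨fun j hj => ((hT j).1 hj).1, hinj, ?_⟩, ?_⟩
    · intro j hj
      by_cases hjS : a j ∈ S
      · right
        obtain ⟨j', hj', h⟩ := key j.1 j le_rfl hjS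
        exact ⟨j', hj', h⟩
      · exact Or.inl hjS
    · -- build the embedding from `insert y (T.image a)`
      have hymem : y ∉ T.image a := by
        simp only [Finset.mem_image]
        rintro ⟨j, hj, h⟩
        exact hy j h.symm
      have hinj' : Set.InjOn a ↑T := by
        intro x hx y' hy' h
        by_contra hne
        exact hinj x hx y' hy' hne h
      set A : Finset D := insert y (T.image a) with hA
      have hcard : A.card = T.card + 1 := by
        rw [hA, Finset.card_insert_of_notMem hymem, Finset.card_image_of_injOn hinj']
      have hAS : ∀ x ∈ A, x ∈ S := by
        intro x hx
        rw [hA, Finset.mem_insert] at hx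
        rcases hx with rfl | hx
        · exact hyS
        · obtain ⟨j, hj, rfl⟩ := Finset.mem_image.1 hx
          exact ((hT j).1 hj).1
      refine ⟨((finCongr hcard.symm).trans A.equivFin.symm).toEmbedding.trans
          (Function.Embedding.subtype _), fun i => ?_⟩
      exact hAS _ (A.equivFin.symm (finCongr hcard.symm i)).2
  · rintro ⟨T, ⟨h1, h2, h3⟩, e, he⟩
    set A : Finset D := T.image a with hA
    have hAcard : A.card = T.card := Finset.card_image_of_injOn
      (fun x hx y hy h => by_contra fun hne => h2 x hx y hy hne h)
    have hex : ∃ i, e i ∉ A := by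
      by_contra h
      push_neg at h
      have e' : Fin (T.card + 1) ↪ {x // x ∈ A} :=
        ⟨fun i => ⟨e i, h i⟩, fun i j hij => e.injective (congrArg Subtype.val hij)⟩
      have := Fintype.card_le_of_embedding e'
      rw [Fintype.card_fin, Fintype.card_coe, hAcard] at this
      omega
    obtain ⟨i, hi⟩ := hex
    refine ⟨e i, he i, fun j hj => ?_⟩
    apply hi
    by_cases hjT : j ∈ T
    · exact hj ▸ Finset.mem_image.2 ⟨j, hjT, rfl⟩
    · rcases h3 j hjT with hS | ⟨j', hj', hjj'⟩
      · exact absurd (hj ▸ he i) hS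
      · exact Finset.mem_image.2 ⟨j', hj', by rw [← hjj', hj]⟩

end QEProof
namespace QEProof
open PaperQE

variable {C U F : Type} {n : ℕ}

/-! ### Substitution -/

def subst1 (u : Word F) (j : Fin n) : NCAtom C U F 1 → NCAtom C U F n
  | .eq w₁ _ w₂ _ => .eq (w₁ ++ u) j (w₂ ++ u) j
  | .eqc w _ c => .eqc (w ++ u) j c
  | .pred p w _ => .pred p (w ++ u) j

def substIdx (u : Word F) (j0 : Fin n) (w : Word F) (i : Fin (n + 1)) : Word F × Fin n :=
  if h : i = Fin.last n then (w ++ u, j0) else (w, i.castPred h)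

def substAtom (u : Word F) (j0 : Fin n) : BAtom C U F (n + 1) → BAtom C U F n
  | .nc (.eq w₁ i w₂ j) => .nc (.eq (substIdx u j0 w₁ i).1 (substIdx u j0 w₁ i).2
      (substIdx u j0 w₂ j).1 (substIdx u j0 w₂ j).2)
  | .nc (.eqc w i c) => .nc (.eqc (substIdx u j0 w i).1 (substIdx u j0 w i).2 c)
  | .nc (.pred p w i) => .nc (.pred p (substIdx u j0 w i).1 (substIdx u j0 w i).2)
  | .card k Ψ => .card k Ψ

section Semantics2
variable {D : Type*} (cI : C → D) (uI : U → D → Prop) (fI : F → Equiv.Perm D)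

lemma subst1_sat (u : Word F) (j : Fin n) (a : NCAtom C U F 1) (v : Fin n → D) :
    (subst1 u j a).Sat cI uI fI v ↔ a.Sat cI uI fI (fun _ => evalWord fI u (v j)) := by
  cases a <;> simp [subst1, NCAtom.Sat, evalWord_append]

lemma substIdx_sat {v : Fin n → D} {y : D} (u : Word F) (j0 : Fin n)
    (h : y = evalWord fI u (v j0)) (w : Word F) (i : Fin (n + 1)) :
    evalWord fI (substIdx u j0 w i).1 (v (substIdx u j0 w i).2) =
      evalWord fI w ((Fin.snoc v y : Fin (n + 1) → D) i) := by
  unfold substIdx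
  split_ifs with hi
  · subst hi
    simp [evalWord_append, Fin.snoc_last, h]
  · rw [snoc_ne_last v y hi]

lemma substAtom_sat {v : Fin n → D} {y : D} (u : Word F) (j0 : Fin n)
    (h : y = evalWord fI u (v j0)) (a : BAtom C U F (n + 1)) :
    (substAtom u j0 a).Sat cI uI fI v ↔ a.Sat cI uI fI (Fin.snoc v y) := by
  cases a with
  | card k Ψ => exact Iff.rfl
  | nc a =>
    cases a <;>
      simp [substAtom, BAtom.Sat, NCAtom.Sat, substIdx_sat (fI := fI) u j0 h]

end Semantics2

/-! ### Buckets of a conjunct -/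

def lowersOf (L : List (BAtom C U F (n + 1) × Bool)) : List (BAtom C U F n × Bool) :=
  L.filterMap fun lit => match classify lit with | .lower b s => some (b, s) | _ => none

def unariesOf (L : List (BAtom C U F (n + 1) × Bool)) : List (NCAtom C U F 1 × Bool) :=
  L.filterMap fun lit => match classify lit with | .unary a s => some (a, s) | _ => none

def avoidsOf (L : List (BAtom C U F (n + 1) × Bool)) : List (Word F × Fin n) :=
  L.filterMap fun lit => match classify lit with | .avoid u j => some (u, j) | _ => none

def posOf (lit : BAtom C U F (n + 1) × Bool) : Option (Word F × Fin n) :=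
  match classify lit with | .pos u j => some (u, j) | _ => none

lemma posOf_eq_some {lit : BAtom C U F (n + 1) × Bool} {p : Word F × Fin n}
    (h : posOf lit = some p) : classify lit = .pos p.1 p.2 := by
  unfold posOf at h
  cases hk : classify lit with
  | pos u j =>
    simp only [hk] at h
    cases h
    simp [hk]
  | lower b s => simp [hk] at h
  | unary a s => simp [hk] at h
  | avoid u j => simp [hk] at h

section Semantics3
variable {D : Type*} (cI : C → D) (uI : U → D → Prop) (fI : F → Equiv.Perm D)

lemma conj_decomp {L : List (BAtom C U F (n + 1) × Bool)}
    (hnp : ∀ lit ∈ L, posOf lit = none) (v : Fin n → D) (y : D) :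
    conjSat (fun a : BAtom C U F (n + 1) => a.Sat cI uI fI (Fin.snoc v y)) L ↔
      (conjSat (fun a : BAtom C U F n => a.Sat cI uI fI v) (lowersOf L) ∧
       conjSat (fun a : NCAtom C U F 1 => a.Sat cI uI fI (fun _ => y)) (unariesOf L) ∧
       ∀ p ∈ avoidsOf L, y ≠ evalWord fI p.1 (v p.2)) := by
  induction L with
  | nil => simp [conjSat, lowersOf, unariesOf, avoidsOf]
  | cons lit L ih =>
    have hnp' : ∀ l ∈ L, posOf l = none := fun l hl => hnp l (List.mem_cons_of_mem _ hl)
    have ihL := ih hnp'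
    have hl := classify_sat cI uI fI lit v y
    have hsplit : conjSat (fun a : BAtom C U F (n + 1) => a.Sat cI uI fI (Fin.snoc v y))
        (lit :: L) ↔
        litSat (fun a : BAtom C U F (n + 1) => a.Sat cI uI fI (Fin.snoc v y)) lit ∧
        conjSat (fun a : BAtom C U F (n + 1) => a.Sat cI uI fI (Fin.snoc v y)) L := by
      simp [conjSat]
    cases hk : classify lit with
    | lower b s =>
      rw [hk] at hl
      have e1 : lowersOf (lit :: L) = (b, s) :: lowersOf L := by
        simp [lowersOf, List.filterMap_cons, hk]
      have e2 : unariesOf (lit :: L) = unariesOf L := by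
        simp [unariesOf, List.filterMap_cons, hk]
      have e3 : avoidsOf (lit :: L) = avoidsOf L := by
        simp [avoidsOf, List.filterMap_cons, hk]
      rw [hsplit, hl, ihL, e1, e2, e3]
      simp only [conjSat, List.forall_mem_cons]
      tauto
    | unary a s =>
      rw [hk] at hl
      have e1 : lowersOf (lit :: L) = lowersOf L := by
        simp [lowersOf, List.filterMap_cons, hk]
      have e2 : unariesOf (lit :: L) = (a, s) :: unariesOf L := by
        simp [unariesOf, List.filterMap_cons, hk]
      have e3 : avoidsOf (lit :: L) = avoidsOf L := by
        simp [avoidsOf, List.filterMap_cons, hk]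
      rw [hsplit, hl, ihL, e1, e2, e3]
      simp only [conjSat, List.forall_mem_cons]
      tauto
    | avoid u j =>
      rw [hk] at hl
      have e1 : lowersOf (lit :: L) = lowersOf L := by
        simp [lowersOf, List.filterMap_cons, hk]
      have e2 : unariesOf (lit :: L) = unariesOf L := by
        simp [unariesOf, List.filterMap_cons, hk]
      have e3 : avoidsOf (lit :: L) = (u, j) :: avoidsOf L := by
        simp [avoidsOf, List.filterMap_cons, hk]
      rw [hsplit, hl, ihL, e1, e2, e3]
      simp only [conjSat, List.forall_mem_cons]
      tauto
    | pos u j =>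
      exact absurd (hnp lit List.mem_cons_self) (by simp [posOf, hk])

end Semantics3

end QEProof
namespace QEProof
open PaperQE

variable {C U F : Type} {n : ℕ}

/-! ### The counting formula -/

def psiBC (un : List (NCAtom C U F 1 × Bool)) : BC (NCAtom C U F 1) :=
  bigAnd (un.map litToBC)

def substPsi (un : List (NCAtom C U F 1 × Bool)) (p : Word F × Fin n) :
    BC (BAtom C U F n) :=
  bcMap (fun a => BAtom.nc (subst1 p.1 p.2 a)) (psiBC un)

def eqA (p q : Word F × Fin n) : BAtom C U F n := .nc (.eq p.1 p.2 q.1 q.2)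

noncomputable def countFormula (un : List (NCAtom C U F 1 × Bool)) (av : List (Word F × Fin n)) :
    BC (BAtom C U F n) :=
  bigOr ((Finset.univ : Finset (Finset (Fin av.length))).toList.map fun T =>
    .and (bigAnd (T.toList.map fun j => substPsi un (av.get j)))
    (.and (bigAnd (T.toList.flatMap fun j => T.toList.map fun j' =>
        if j = j' then .tru else .not (.atom (eqA (av.get j) (av.get j')))))
    (.and (bigAnd ((Finset.univ \ T).toList.map fun j =>
        .or (.not (substPsi un (av.get j)))
            (bigOr (T.toList.map fun j' => .atom (eqA (av.get j) (av.get j'))))))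
        (.atom (.card (T.card + 1) (psiBC un))))))

section Semantics4
variable {D : Type*} (cI : C → D) (uI : U → D → Prop) (fI : F → Equiv.Perm D)

lemma psiBC_sat (un : List (NCAtom C U F 1 × Bool)) (y : D) :
    (psiBC un).Sat (fun a : NCAtom C U F 1 => a.Sat cI uI fI (fun _ => y)) ↔
      conjSat (fun a : NCAtom C U F 1 => a.Sat cI uI fI (fun _ => y)) un := by
  rw [psiBC, bigAnd_sat]
  constructor
  · intro h p hp
    rw [← litToBC_sat]
    exact h _ (List.mem_map.2 ⟨p, hp, rfl⟩)
  · intro h φ hφ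
    obtain ⟨p, hp, rfl⟩ := List.mem_map.1 hφ
    rw [litToBC_sat]
    exact h p hp

lemma substPsi_sat (un : List (NCAtom C U F 1 × Bool)) (p : Word F × Fin n)
    (v : Fin n → D) :
    (substPsi un p).Sat (fun b : BAtom C U F n => b.Sat cI uI fI v) ↔
      (psiBC un).Sat (fun a : NCAtom C U F 1 =>
        a.Sat cI uI fI (fun _ => evalWord fI p.1 (v p.2))) := by
  rw [substPsi, bcMap_sat]
  exact bc_sat_congr (fun a => subst1_sat cI uI fI p.1 p.2 a v) _

lemma countFormula_sat (un : List (NCAtom C U F 1 × Bool)) (av : List (Word F × Fin n))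
    (v : Fin n → D) :
    (countFormula un av).Sat (fun b : BAtom C U F n => b.Sat cI uI fI v) ↔
      ∃ y : D, conjSat (fun a : NCAtom C U F 1 => a.Sat cI uI fI (fun _ => y)) un ∧
        ∀ p ∈ av, y ≠ evalWord fI p.1 (v p.2) := by
  classical
  have key := count_lemma {y : D | (psiBC un).Sat
      (fun a : NCAtom C U F 1 => a.Sat cI uI fI (fun _ => y))}
    (fun j : Fin av.length => evalWord fI (av.get j).1 (v (av.get j).2))
  have hR : (∃ y : D, conjSat (fun a : NCAtom C U F 1 => a.Sat cI uI fI (fun _ => y)) un ∧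
      ∀ p ∈ av, y ≠ evalWord fI p.1 (v p.2)) ↔
      (∃ y, y ∈ {y : D | (psiBC un).Sat
          (fun a : NCAtom C U F 1 => a.Sat cI uI fI (fun _ => y))} ∧
        ∀ j : Fin av.length, y ≠ evalWord fI (av.get j).1 (v (av.get j).2)) := by
    apply exists_congr; intro y
    rw [Set.mem_setOf_eq, psiBC_sat]
    apply and_congr Iff.rfl
    exact forall_mem_get av _
  rw [hR, key, countFormula, bigOr_sat]
  constructor
  · rintro ⟨φ, hφ, hsat⟩
    obtain ⟨T, hT, rfl⟩ := List.mem_map.1 hφ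
    obtain ⟨s1, s2, s3, s4⟩ := hsat
    refine ⟨T, ⟨?_, ?_, ?_⟩, s4⟩
    · intro j hj
      have := (bigAnd_sat _ _).1 s1 _ (List.mem_map.2 ⟨j, Finset.mem_toList.2 hj, rfl⟩)
      rw [substPsi_sat] at this
      exact this
    · intro j hj j' hj' hne
      have := (bigAnd_sat _ _).1 s2 _ (List.mem_flatMap.2
        ⟨j, Finset.mem_toList.2 hj, List.mem_map.2 ⟨j', Finset.mem_toList.2 hj', rfl⟩⟩)
      rw [if_neg hne] at this
      exact this
    · intro j hj
      have := (bigAnd_sat _ _).1 s3 _ (List.mem_map.2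
        ⟨j, Finset.mem_toList.2 (Finset.mem_sdiff.2 ⟨Finset.mem_univ j, hj⟩), rfl⟩)
      rcases this with h | h
      · left
        intro hc
        apply h
        rw [substPsi_sat]
        exact hc
      · right
        rw [bigOr_sat] at h
        obtain ⟨φ, hφ, hs⟩ := h
        obtain ⟨j', hj', rfl⟩ := List.mem_map.1 hφ
        exact ⟨j', Finset.mem_toList.1 hj', hs⟩
  · rintro ⟨T, ⟨c1, c2, c3⟩, c4⟩
    refine ⟨_, List.mem_map.2 ⟨T, Finset.mem_toList.2 (Finset.mem_univ T), rfl⟩,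
      ?_, ?_, ?_, c4⟩
    · rw [bigAnd_sat]
      intro φ hφ
      obtain ⟨j, hj, rfl⟩ := List.mem_map.1 hφ
      rw [substPsi_sat]
      exact c1 j (Finset.mem_toList.1 hj)
    · rw [bigAnd_sat]
      intro φ hφ
      obtain ⟨j, hj, hφ'⟩ := List.mem_flatMap.1 hφ
      obtain ⟨j', hj', rfl⟩ := List.mem_map.1 hφ'
      by_cases hne : j = j'
      · rw [if_pos hne]; trivial
      · rw [if_neg hne]
        exact c2 j (Finset.mem_toList.1 hj) j' (Finset.mem_toList.1 hj') hne
    · rw [bigAnd_sat]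
      intro φ hφ
      obtain ⟨j, hj, rfl⟩ := List.mem_map.1 hφ
      have hjT : j ∉ T := (Finset.mem_sdiff.1 (Finset.mem_toList.1 hj)).2
      rcases c3 j hjT with h | ⟨j', hj', h⟩
      · left
        intro hc
        apply h
        rw [substPsi_sat] at hc
        exact hc
      · right
        rw [bigOr_sat]
        exact ⟨_, List.mem_map.2 ⟨j', Finset.mem_toList.2 hj', rfl⟩, h⟩

end Semantics4

/-! ### Eliminating one existential -/

noncomputable def elimConj (L : List (BAtom C U F (n + 1) × Bool)) : BC (BAtom C U F n) :=
  match L.findSome? posOf with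
  | some p => bigAnd (L.map fun lit => litToBC (substAtom p.1 p.2 lit.1, lit.2))
  | none => .and (bigAnd ((lowersOf L).map litToBC))
      (countFormula (unariesOf L) (avoidsOf L))

noncomputable def elimEx (ψ : BC (BAtom C U F (n + 1))) : BC (BAtom C U F n) :=
  bigOr ((dnf true ψ).map elimConj)

section Semantics5
variable {D : Type*} (cI : C → D) (uI : U → D → Prop) (fI : F → Equiv.Perm D)

lemma substLit_sat {v : Fin n → D} {y : D} (u : Word F) (j0 : Fin n)
    (h : y = evalWord fI u (v j0)) (p : BAtom C U F (n + 1) × Bool) :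
    litSat (fun b : BAtom C U F n => b.Sat cI uI fI v) (substAtom u j0 p.1, p.2) ↔
      litSat (fun a : BAtom C U F (n + 1) => a.Sat cI uI fI (Fin.snoc v y)) p := by
  obtain ⟨a, s⟩ := p
  cases s <;> simp [litSat, substAtom_sat cI uI fI u j0 h]

lemma elimConj_sat (L : List (BAtom C U F (n + 1) × Bool)) (v : Fin n → D) :
    (elimConj L).Sat (fun b : BAtom C U F n => b.Sat cI uI fI v) ↔
      ∃ y : D, conjSat (fun a : BAtom C U F (n + 1) =>
        a.Sat cI uI fI (Fin.snoc v y)) L := by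
  rcases hfind : L.findSome? posOf with _ | ⟨u, j0⟩
  · rw [show elimConj L = .and (bigAnd ((lowersOf L).map litToBC))
        (countFormula (unariesOf L) (avoidsOf L)) from by rw [elimConj, hfind]]
    have hnp : ∀ lit ∈ L, posOf lit = none := List.findSome?_eq_none_iff.1 hfind
    constructor
    · rintro ⟨hlow, hcount⟩
      rw [countFormula_sat] at hcount
      obtain ⟨y, hy1, hy2⟩ := hcount
      refine ⟨y, ?_⟩
      rw [conj_decomp cI uI fI hnp v y]
      refine ⟨?_, hy1, hy2⟩
      intro p hp
      rw [← litToBC_sat]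
      exact (bigAnd_sat _ _).1 hlow _ (List.mem_map.2 ⟨p, hp, rfl⟩)
    · rintro ⟨y, hy⟩
      rw [conj_decomp cI uI fI hnp v y] at hy
      obtain ⟨h1, h2, h3⟩ := hy
      refine ⟨?_, ?_⟩
      · rw [bigAnd_sat]
        intro φ hφ
        obtain ⟨p, hp, rfl⟩ := List.mem_map.1 hφ
        rw [litToBC_sat]
        exact h1 p hp
      · rw [countFormula_sat]
        exact ⟨y, h2, h3⟩
  · rw [show elimConj L = bigAnd (L.map fun lit =>
        litToBC (substAtom u j0 lit.1, lit.2)) from by rw [elimConj, hfind]]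
    obtain ⟨lit0, hmem0, hpos0⟩ := List.exists_of_findSome?_eq_some hfind
    have hcl : classify lit0 = .pos u j0 := posOf_eq_some hpos0
    constructor
    · intro h
      refine ⟨evalWord fI u (v j0), fun lit hlit => ?_⟩
      have hs := (bigAnd_sat _ _).1 h _ (List.mem_map.2 ⟨lit, hlit, rfl⟩)
      rw [litToBC_sat] at hs
      exact (substLit_sat cI uI fI u j0 rfl lit).1 hs
    · rintro ⟨y, hy⟩
      have hyeq : y = evalWord fI u (v j0) := by
        have := (classify_sat cI uI fI lit0 v y).1 (hy lit0 hmem0)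
        simpa only [hcl] using this
      rw [bigAnd_sat]
      intro φ hφ
      obtain ⟨lit, hlit, rfl⟩ := List.mem_map.1 hφ
      rw [litToBC_sat]
      exact (substLit_sat cI uI fI u j0 hyeq lit).2 (hy lit hlit)

lemma elimEx_sat (ψ : BC (BAtom C U F (n + 1))) (v : Fin n → D) :
    (elimEx ψ).Sat (fun b : BAtom C U F n => b.Sat cI uI fI v) ↔
      ∃ y : D, ψ.Sat (fun a : BAtom C U F (n + 1) => a.Sat cI uI fI (Fin.snoc v y)) := by
  rw [elimEx, bigOr_sat]
  constructor
  · rintro ⟨φ, hφ, hsat⟩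
    obtain ⟨c, hc, rfl⟩ := List.mem_map.1 hφ
    obtain ⟨y, hy⟩ := (elimConj_sat cI uI fI c v).1 hsat
    have hd := dnf_sat (fun a : BAtom C U F (n + 1) =>
      a.Sat cI uI fI (Fin.snoc v y)) ψ true
    rw [if_pos rfl] at hd
    exact ⟨y, hd.1 ⟨c, hc, hy⟩⟩
  · rintro ⟨y, hy⟩
    have hd := dnf_sat (fun a : BAtom C U F (n + 1) =>
      a.Sat cI uI fI (Fin.snoc v y)) ψ true
    rw [if_pos rfl] at hd
    obtain ⟨c, hc, hcsat⟩ := hd.2 hy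
    exact ⟨elimConj c, List.mem_map.2 ⟨c, hc, rfl⟩, (elimConj_sat cI uI fI c v).2 ⟨y, hcsat⟩⟩

end Semantics5

/-! ### Quantifier elimination -/

lemma qe {n : ℕ} (φ : BForm C U F n) :
    ∃ ψ : BC (BAtom C U F n),
      ∀ (D : Type*) (cI : C → D) (uI : U → D → Prop) (fI : F → Equiv.Perm D)
        (v : Fin n → D),
        φ.Sat cI uI fI v ↔ ψ.Sat (fun a : BAtom C U F n => a.Sat cI uI fI v) := by
  induction φ with
  | atom a => exact ⟨.atom a, fun _ _ _ _ _ => Iff.rfl⟩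
  | not φ ih =>
    obtain ⟨ψ, h⟩ := ih
    exact ⟨.not ψ, fun D cI uI fI v => not_congr (h D cI uI fI v)⟩
  | and φ₁ φ₂ ih₁ ih₂ =>
    obtain ⟨ψ₁, h₁⟩ := ih₁
    obtain ⟨ψ₂, h₂⟩ := ih₂
    exact ⟨.and ψ₁ ψ₂, fun D cI uI fI v => and_congr (h₁ D cI uI fI v) (h₂ D cI uI fI v)⟩
  | or φ₁ φ₂ ih₁ ih₂ =>
    obtain ⟨ψ₁, h₁⟩ := ih₁
    obtain ⟨ψ₂, h₂⟩ := ih₂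
    exact ⟨.or ψ₁ ψ₂, fun D cI uI fI v => or_congr (h₁ D cI uI fI v) (h₂ D cI uI fI v)⟩
  | ex φ ih =>
    obtain ⟨ψ, h⟩ := ih
    refine ⟨elimEx ψ, fun D cI uI fI v => ?_⟩
    exact (exists_congr fun y => h D cI uI fI (Fin.snoc v y)).trans
      (elimEx_sat cI uI fI ψ v).symm
  | all φ ih =>
    obtain ⟨ψ, h⟩ := ih
    refine ⟨.not (elimEx (.not ψ)), fun D cI uI fI v => ?_⟩
    have h2 := elimEx_sat cI uI fI (BC.not ψ) v
    constructor
    · intro hall hc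
      obtain ⟨y, hy⟩ := h2.1 hc
      exact hy ((h D cI uI fI (Fin.snoc v y)).1 (hall y))
    · intro hne y
      by_contra hc
      exact hne (h2.2 ⟨y, fun hs => hc ((h D cI uI fI (Fin.snoc v y)).2 hs)⟩)

end QEProof

open PaperQE in
/-- Quantifier elimination for sentences. Every first-order
σ-sentence `φ` (a formula without free variables built from bijective atomic
formulas) is equivalent over bijective σ-structures to a Boolean combination
of cardinality statements: there is a Boolean combination `ψ` whose atoms are
pairs `(k, Ψ)` representing `∃^{≥k} x Ψ(x)` — `Ψ` a Boolean combination of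
bijective atoms in the single variable `x` — such that for every bijective
σ-structure `(D, cI, uI, fI)`, `φ` holds in the structure iff `ψ` does. -/
theorem quantifier_elimination_FOBij_sentence
    {C U F : Type} [Fintype C] [Fintype U] [Fintype F]
    (φ : BForm C U F 0) :
    ∃ ψ : BC (ℕ × BC (NCAtom C U F 1)),
      ∀ (D : Type*) (cI : C → D) (uI : U → D → Prop) (fI : F → Equiv.Perm D),
        φ.Sat cI uI fI (fun i => i.elim0) ↔
          ψ.Sat (fun p =>
            ∃ e : Fin p.1 ↪ D, ∀ i : Fin p.1,
              p.2.Sat (fun a => a.Sat cI uI fI (fun _ => e i))) := by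

  obtain ⟨ψ₀, h⟩ := QEProof.qe φ
  refine ⟨QEProof.bcMap (fun b : BAtom C U F 0 =>
      match b with
      | .card k Ψ => (k, Ψ)
      | .nc (.eq _ i _ _) => i.elim0
      | .nc (.eqc _ i _) => i.elim0
      | .nc (.pred _ _ i) => i.elim0) ψ₀, fun D cI uI fI => ?_⟩
  rw [h D cI uI fI (fun i => i.elim0), QEProof.bcMap_sat]
  apply QEProof.bc_sat_congr
  intro a
  match a with
  | .card k Ψ => exact Iff.rfl
  | .nc (.eq _ i _ _) => exact i.elim0
  | .nc (.eqc _ i _) => exact i.elim0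
  | .nc (.pred _ _ i) => exact i.elim0
end

section
/- Interpretation of atomic formulas (correctness of the reduction): let S = ⟨D; R_1,…,R_q⟩ be a finite ρ-structure, with m the maximal arity of its relations, such that degree_S(x) ≤ d for every x ∈ D. Then there exist a bijective σ-structure S′ = ⟨D′; D̂, T_1,…,T_q, g, f_1,…,f_m⟩ (all function symbols interpreted as permutations of D′) and an injection ι : D → D′ whose image is the interpretation of the monadic predicate D̂, such that for every relation symbol R_i of arity k and all (a_1,…,a_k) ∈ D^k: S ⊨ R_i(a_1,…,a_k) if and only if S′ ⊨ θ_i(ι(a_1),…,ι(a_k)), where θ_i(x_1,…,x_k) is the σ-formula ∃t (T_i(t) ∧ ⋀_{1≤j≤k} ⋁_{1≤h≤d} f_j(t) = g^h(x_j)). -/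
/-!
Degrees of relational structures. A relational signature ρ = {R_1,…,R_q} has
`q` relation symbols, `R i` of arity `a i`; a ρ-structure with domain `D`
interprets each `R i` as a finite set `R i : Finset (Fin (a i) → D)` of
`a i`-tuples.
-/

namespace PaperDeg

variable {D : Type*} [DecidableEq D] {q : ℕ} {a : Fin q → ℕ}

/-- The (tuple) degree of `x` in the structure: the total number of pairs
`(i, t̄)` with `t̄ ∈ R i` and `x` occurring as a component of `t̄`. -/
def deg (R : ∀ i, Finset (Fin (a i) → D)) (x : D) : ℕ :=
  ∑ i : Fin q, ((R i).filter fun t => ∃ j, t j = x).card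

/-- The adjacency degree of `x` in the structure: the number of elements
`y ≠ x` such that `x` and `y` both occur as components of some tuple of some
relation `R i`. -/
noncomputable def deg1 (R : ∀ i, Finset (Fin (a i) → D)) (x : D) : ℕ :=
  Set.ncard {y : D | y ≠ x ∧ ∃ i : Fin q, ∃ t ∈ R i, (∃ j, t j = x) ∧ ∃ j, t j = y}

end PaperDeg

universe u

/-!
Take `D' = (D ⊕ tuples) × ℤ/(d+1)`, with `g` climbing the cycle of levels, `ι x = (x, 0)`
and one point `(b, 0)` for each tuple `b`. The tuples containing a given element `x` are at
most `d` in number, so they can be ranked by `1, …, d`; `f_j` sends the point of a tuple `b`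
to the copy of its `j`-th entry `x` at the level given by the rank of `b` among the tuples
containing `x`. Ranks separate the tuples containing `x`, so each `f_j` is injective on the
tuple points and extends to a permutation, and `g ^ h (ι x) = (x, h)` shows that `θ_i`
reads the entries of `b` back off the values `f_j (b, 0)`.
-/

open Finset

theorem Equiv.prodCongr_refl_addRight_one_pow_apply {α M : Type*} [AddGroupWithOne M]
    (y : α) (k : M) (n : ℕ) :
    (Equiv.prodCongr (Equiv.refl α) (Equiv.addRight 1) ^ n) (y, k) = (y, k + n) := by
  induction n with
  | zero => simp
  | succ n ih =>
    rw [pow_succ', Equiv.Perm.mul_apply, ih]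
    simp [add_assoc]

namespace PaperDeg

variable {D : Type u} {q : ℕ} {a : Fin q → ℕ} (R : ∀ i, Finset (Fin (a i) → D))

abbrev Tuple : Type u := Σ i : Fin q, {t : Fin (a i) → D // t ∈ R i}

abbrev Carrier (d : ℕ) : Type u := (D ⊕ Tuple R) × ZMod (d + 1)

@[simps apply]
def embed (d : ℕ) : D ↪ Carrier R d :=
  ⟨fun x => (Sum.inl x, 0), fun _ _ h => Sum.inl_injective (congrArg Prod.fst h)⟩

def shift (d : ℕ) : Equiv.Perm (Carrier R d) := Equiv.prodCongr (Equiv.refl _) (Equiv.addRight 1)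

theorem shift_pow_embed (d h : ℕ) (x : D) :
    (shift R d ^ h) (embed R d x) = (Sum.inl x, (h : ZMod (d + 1))) := by
  rw [shift, embed_apply, Equiv.prodCongr_refl_addRight_one_pow_apply, zero_add]

variable [DecidableEq D]

def occurrences (x : D) : Finset (Tuple R) := univ.filter fun b => ∃ j, b.2.1 j = x

theorem mem_occurrences_self (b : Tuple R) (j : Fin (a b.1)) : b ∈ occurrences R (b.2.1 j) :=
  Finset.mem_filter.mpr ⟨mem_univ b, j, rfl⟩

theorem card_occurrences (x : D) : #(occurrences R x) = deg R x := by
  rw [occurrences, deg, Finset.card_filter, Fintype.sum_sigma]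
  refine Finset.sum_congr rfl fun i _ => ?_
  rw [Finset.card_filter, ← Finset.sum_coe_sort (R i)]

noncomputable def level (x : D) (b : Tuple R) : ℕ := (occurrences R x).toList.idxOf b + 1

variable {R}

theorem level_mem_Icc {x : D} {b : Tuple R} (hb : b ∈ occurrences R x) :
    level R x b ∈ Icc 1 (deg R x) := by
  have := List.idxOf_lt_length_iff.mpr (Finset.mem_toList.mpr hb)
  rw [Finset.length_toList, card_occurrences] at this
  simp only [level, Finset.mem_Icc]
  omega

theorem level_injOn (x : D) : Set.InjOn (level R x) (occurrences R x) := fun _ hb _ _ h =>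
  (List.idxOf_inj (Finset.mem_toList.mpr hb)).mp (Nat.succ_injective h)

theorem level_natCast_injOn {d : ℕ} (hdeg : ∀ x, deg R x ≤ d) (x : D) :
    Set.InjOn (fun b => (level R x b : ZMod (d + 1))) (occurrences R x) := by
  intro b hb b' hb' h
  have hlt : ∀ b ∈ occurrences R x, level R x b < d + 1 := fun b hb => by
    have := (Finset.mem_Icc.mp (level_mem_Icc hb)).2
    have := hdeg x
    omega
  rw [ZMod.natCast_eq_natCast_iff', Nat.mod_eq_of_lt (hlt b hb), Nat.mod_eq_of_lt (hlt b' hb')]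
    at h
  exact level_injOn x hb hb' h

theorem exists_perm_tuple_to_entry [Fintype D] {d : ℕ} (hdeg : ∀ x, deg R x ≤ d) (j : ℕ) :
    ∃ π : Equiv.Perm (Carrier R d), ∀ (b : Tuple R) (hj : j < a b.1),
      π (Sum.inr b, 0) = (Sum.inl (b.2.1 ⟨j, hj⟩), (level R (b.2.1 ⟨j, hj⟩) b : ZMod (d + 1))) := by
  let entryPoint (b : {b : Tuple R // j < a b.1}) : Carrier R d :=
    (Sum.inl (b.1.2.1 ⟨j, b.2⟩), level R (b.1.2.1 ⟨j, b.2⟩) b.1)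
  have hentry : Function.Injective entryPoint := by
    rintro ⟨b, hj⟩ ⟨b', hj'⟩ h
    obtain ⟨hx, hlevel⟩ := Prod.mk.inj h
    have hb' := mem_occurrences_self R b' ⟨j, hj'⟩
    rw [← Sum.inl_injective hx] at hb' hlevel
    exact Subtype.ext (level_natCast_injOn hdeg _ (mem_occurrences_self R b ⟨j, hj⟩) hb' hlevel)
  obtain ⟨π, hπ⟩ := Equiv.Perm.exists_extending_pair
    (fun b : {b : Tuple R // j < a b.1} => ((Sum.inr b.1, 0) : Carrier R d)) entryPoint
    (fun _ _ h => Subtype.ext (Sum.inr_injective (congrArg Prod.fst h))) hentry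
  exact ⟨π, fun b hj => hπ ⟨b, hj⟩⟩

end PaperDeg

open PaperDeg in
/-- Interpretation of atomic formulas; correctness of the
reduction. Let `S = ⟨D; R_1,…,R_q⟩` be a finite ρ-structure whose relations
have arities `a i ≤ m` and whose tuple degree is bounded by `d` at every
element. Then there are a bijective σ-structure
`S' = ⟨D'; D̂, T_1,…,T_q, g, f_1,…,f_m⟩` — monadic predicates `D̂`, `T i` and
permutations `g`, `f j` of `D'` — and an injection `ι : D ↪ D'` whose image is
the interpretation `D̂`, such that for every relation symbol `R i` (of arity
`a i ≤ m`) and every tuple `t`: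
`S ⊨ R_i(t)` iff `S' ⊨ θ_i(ι ∘ t)`, where
`θ_i(x₁,…,x_k) ≡ ∃ s (T_i(s) ∧ ⋀_{1≤j≤k} ⋁_{1≤h≤d} f_j(s) = g^h(x_j))`. -/
theorem interpretation_atomic {D : Type u} [Fintype D] [DecidableEq D]
    {q : ℕ} {a : Fin q → ℕ} (m d : ℕ) (ha : ∀ i, a i ≤ m)
    (R : ∀ i, Finset (Fin (a i) → D)) (hdeg : ∀ x : D, deg R x ≤ d) :
    ∃ (D' : Type u) (Dhat : Set D') (T : Fin q → Set D') (g : Equiv.Perm D')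
      (f : Fin m → Equiv.Perm D') (ι : D ↪ D'),
      Set.range ι = Dhat ∧
      ∀ (i : Fin q) (t : Fin (a i) → D),
        t ∈ R i ↔ ∃ s ∈ T i, ∀ j : Fin (a i),
          ∃ h ∈ Finset.Icc 1 d, f (Fin.castLE (ha i) j) s = (g ^ h) (ι (t j)) := by
  choose f hf using fun j : Fin m => exists_perm_tuple_to_entry hdeg j
  refine ⟨Carrier R d, Set.range (embed R d),
    fun i => Set.range fun t : {t // t ∈ R i} => (Sum.inr ⟨i, t⟩, 0), shift R d, f, embed R d,
    rfl, fun i t => ⟨fun ht => ⟨_, ⟨⟨t, ht⟩, rfl⟩, fun j => ?_⟩, ?_⟩⟩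
  · have hlevel := level_mem_Icc (mem_occurrences_self R ⟨i, t, ht⟩ j)
    refine ⟨_, Finset.Icc_subset_Icc_right (hdeg _) hlevel, ?_⟩
    rw [hf _ _ j.isLt, shift_pow_embed]
    rfl
  · rintro ⟨_, ⟨⟨t', ht'⟩, rfl⟩, hs⟩
    convert ht'
    funext j
    obtain ⟨h, -, hh⟩ := hs j
    rw [hf _ _ j.isLt, shift_pow_embed] at hh
    exact (Sum.inl_injective (congrArg Prod.fst hh)).symm
end

section
/- Interpretation of a bounded degree structure into a bijective structure: let S = ⟨D; R_1,…,R_q⟩ be a finite ρ-structure, with m the maximal arity of its relations, such that degree_S(x) ≤ d for every x ∈ D. Then there exist a bijective σ-structure S′ with domain D′ and an injection ι : D → D′ whose image is the interpretation of the monadic predicate D̂, such that: (i) card(D′) = (d+1)·card(D) + Σ_{i=1}^q card(R_i); and (ii) for every first-order ρ-formula φ(x_1,…,x_p) there is a first-order σ-formula φ′(x_1,…,x_p), depending only on φ, ρ and d (not on S), such that for all (a_1,…,a_p) ∈ D^p: S ⊨ φ(a_1,…,a_p) if and only if S′ ⊨ φ′(ι(a_1),…,ι(a_p)), and moreover every p-tuple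 of elements of D′ satisfying φ′ in S′ lies in (ι(D))^p; that is, φ(S) corresponds exactly to φ′(S′) under ι. -/
namespace PaperDeg

/-- First-order formulas over a relational signature ρ = {R_1,…,R_q}, where
`R i` has arity `a i`; free variables among `Fin n`. Atomic formulas are
`R_i(x_{v 0},…,x_{v (a i - 1)})` and equalities between variables. -/
inductive RForm (q : ℕ) (a : Fin q → ℕ) : ℕ → Type
  | rel : ∀ {n}, (i : Fin q) → (Fin (a i) → Fin n) → RForm q a n
  | eq : ∀ {n}, Fin n → Fin n → RForm q a n
  | not : ∀ {n}, RForm q a n → RForm q a n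
  | and : ∀ {n}, RForm q a n → RForm q a n → RForm q a n
  | or : ∀ {n}, RForm q a n → RForm q a n → RForm q a n
  | ex : ∀ {n}, RForm q a (n + 1) → RForm q a n
  | all : ∀ {n}, RForm q a (n + 1) → RForm q a n

/-- Tarskian satisfaction of relational first-order formulas in the
ρ-structure whose relations are the finite sets `R i` of tuples. -/
def RForm.Sat {D : Type*} {q : ℕ} {a : Fin q → ℕ}
    (R : ∀ i, Finset (Fin (a i) → D)) :
    ∀ {n : ℕ}, RForm q a n → (Fin n → D) → Prop
  | _, .rel i vs, v => (fun j => v (vs j)) ∈ R i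
  | _, .eq i j, v => v i = v j
  | _, .not φ, v => ¬ RForm.Sat R φ v
  | _, .and φ ψ, v => RForm.Sat R φ v ∧ RForm.Sat R ψ v
  | _, .or φ ψ, v => RForm.Sat R φ v ∨ RForm.Sat R ψ v
  | _, .ex φ, v => ∃ y : D, RForm.Sat R φ (Fin.snoc v y)
  | _, .all φ, v => ∀ y : D, RForm.Sat R φ (Fin.snoc v y)

end PaperDeg


namespace Sol
open PaperQE PaperDeg

/-- An always-true bijective formula. -/
def truF {C U F : Type} {n : ℕ} : BForm C U F n := .atom (.card 0 .tru)

lemma truF_sat {C U F : Type} {D : Type*} (cI : C → D) (uI : U → D → Prop)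
    (fI : F → Equiv.Perm D) {n : ℕ} (v : Fin n → D) :
    (truF : BForm C U F n).Sat cI uI fI v :=
  ⟨⟨Fin.elim0, fun x => x.elim0⟩, fun i => i.elim0⟩

def bigAnd {C U F : Type} {n : ℕ} : List (BForm C U F n) → BForm C U F n
  | [] => truF
  | φ :: l => .and φ (bigAnd l)

def bigOr {C U F : Type} {n : ℕ} : List (BForm C U F n) → BForm C U F n
  | [] => .not truF
  | φ :: l => .or φ (bigOr l)

lemma bigAnd_sat {C U F : Type} {D : Type*} (cI : C → D) (uI : U → D → Prop)
    (fI : F → Equiv.Perm D) {n : ℕ} (l : List (BForm C U F n)) (v : Fin n → D) :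
    (bigAnd l).Sat cI uI fI v ↔ ∀ φ ∈ l, φ.Sat cI uI fI v := by
  induction l with
  | nil =>
    exact iff_of_true (truF_sat cI uI fI v) (by simp)
  | cons φ l ih => simp [bigAnd, BForm.Sat, ih]

lemma bigOr_sat {C U F : Type} {D : Type*} (cI : C → D) (uI : U → D → Prop)
    (fI : F → Equiv.Perm D) {n : ℕ} (l : List (BForm C U F n)) (v : Fin n → D) :
    (bigOr l).Sat cI uI fI v ↔ ∃ φ ∈ l, φ.Sat cI uI fI v := by
  induction l with
  | nil =>
    exact iff_of_false (fun h => h (truF_sat cI uI fI v)) (by simp)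
  | cons φ l ih => simp [bigOr, BForm.Sat, ih]

/-- The predicate `D̂` applied to variable `i`. -/
def dhat {q m : ℕ} {n : ℕ} (i : Fin n) :
    BForm Empty (Option (Fin q)) (Option (Fin m)) n :=
  .atom (.nc (.pred none [] i))

/-- The word `g^{-k} ∘ f_j`. -/
def wrd {m : ℕ} (j : Fin m) (k : ℕ) : Word (Option (Fin m)) :=
  List.replicate k (none, false) ++ [(some j, true)]

variable {q : ℕ} {a : Fin q → ℕ}

/-- The structure-independent translation of relational formulas into
bijective formulas. -/
def tr (m d : ℕ) (ha : ∀ i, a i ≤ m) :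
    ∀ {n : ℕ}, RForm q a n → BForm Empty (Option (Fin q)) (Option (Fin m)) n
  | _, .rel i vs => .ex (.and (.atom (.nc (.pred (some i) [] (Fin.last _))))
      (bigAnd (List.ofFn fun j : Fin (a i) =>
        bigOr ((List.range (d+1)).map fun k =>
          .atom (.nc (.eq (wrd (Fin.castLE (ha i) j) k) (Fin.last _) []
            (Fin.castSucc (vs j))))))))
  | _, .eq i j => .atom (.nc (.eq [] i [] j))
  | _, .not φ => .not (tr m d ha φ)
  | _, .and φ ψ => .and (tr m d ha φ) (tr m d ha ψ)
  | _, .or φ ψ => .or (tr m d ha φ) (tr m d ha ψ)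
  | _, .ex φ => .ex (.and (dhat (Fin.last _)) (tr m d ha φ))
  | _, .all φ => .all (.or (.not (dhat (Fin.last _))) (tr m d ha φ))

lemma evalWord_append {F : Type} {D : Type*} (fI : F → Equiv.Perm D)
    (w₁ w₂ : Word F) (x : D) :
    evalWord fI (w₁ ++ w₂) x = evalWord fI w₁ (evalWord fI w₂ x) := by
  induction w₁ with
  | nil => rfl
  | cons p w ih => obtain ⟨f, b⟩ := p; simp [evalWord, ih]

section Struct

variable (m d : ℕ) {D : Type u} [Fintype D] [DecidableEq D]
  (R : ∀ i, Finset (Fin (a i) → D))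

/-- Tuple nodes. -/
abbrev TN : Type u := Σ i : Fin q, {t : Fin (a i) → D // t ∈ R i}

/-- The domain of the bijective structure. -/
abbrev Dom : Type u := (D × Fin (d+1)) ⊕ TN R

/-- The `j`-th component of a tuple node, if defined. -/
def comp (j : Fin m) (z : TN R) : Option D :=
  if h : (j : ℕ) < a z.1 then some (z.2.1 ⟨j, h⟩) else none

lemma card_fiber_le (hdeg : ∀ x : D, deg R x ≤ d) (j : Fin m) (x : D) :
    Nat.card {z : TN R // comp m R j z = some x} ≤ d + 1 := by
  classical
  have hinj : Function.Injective
      (fun z : {z : TN R // comp m R j z = some x} =>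
        (⟨z.1.1, ⟨z.1.2.1, by
          simp only [Finset.mem_filter]
          refine ⟨z.1.2.2, ?_⟩
          have hz := z.2
          unfold comp at hz
          split at hz
          · exact ⟨_, Option.some_injective _ hz⟩
          · exact absurd hz (by simp)⟩⟩ :
          Σ i : Fin q, {t : Fin (a i) → D //
            t ∈ (R i).filter fun t => ∃ j₀, t j₀ = x})) := by
    rintro ⟨⟨i, t, ht⟩, hz⟩ ⟨⟨i', t', ht'⟩, hz'⟩ h
    obtain ⟨rfl, h2⟩ := Sigma.mk.inj_iff.mp h
    have h3 : t = t' := congrArg Subtype.val (eq_of_heq h2)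
    subst h3
    rfl
  calc Nat.card {z : TN R // comp m R j z = some x}
      ≤ Nat.card (Σ i : Fin q, {t : Fin (a i) → D //
          t ∈ (R i).filter fun t => ∃ j₀, t j₀ = x}) :=
        Nat.card_le_card_of_injective _ hinj
    _ = deg R x := by
        rw [Nat.card_eq_fintype_card, Fintype.card_sigma, deg]
        exact Finset.sum_congr rfl fun i _ => Fintype.card_coe _
    _ ≤ d + 1 := le_trans (hdeg x) (Nat.le_succ d)

lemma exists_E (hdeg : ∀ x : D, deg R x ≤ d) (j : Fin m) :
    ∃ E : {z : TN R // (comp m R j z).isSome} → D × Fin (d+1),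
      Function.Injective E ∧
      ∀ (z : {z : TN R // (comp m R j z).isSome}) (x : D),
        comp m R j z.1 = some x → (E z).1 = x := by
  classical
  have hcard : ∀ x : D,
      Nonempty ({z : TN R // comp m R j z = some x} ↪ Fin (d+1)) := by
    intro x
    apply Function.Embedding.nonempty_of_card_le
    rw [← Nat.card_eq_fintype_card, ← Nat.card_eq_fintype_card]
    simpa using card_fiber_le m d R hdeg j x
  have e := fun x => (hcard x).some
  have hval' : ∀ z : {z : TN R // (comp m R j z).isSome},
      ∃ x : D, comp m R j z.1 = some x :=
    fun z => Option.isSome_iff_exists.mp z.2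
  choose val hval using hval'
  -- factor through the sigma type
  let G : (Σ x : D, {z : TN R // comp m R j z = some x}) → D × Fin (d+1) :=
    fun p => (p.1, e p.1 p.2)
  have hG : Function.Injective G := by
    rintro ⟨x, w⟩ ⟨x', w'⟩ h
    obtain ⟨h1, h2⟩ := Prod.mk.injEq .. ▸ h
    · subst h1
      have : w = w' := (e x).injective h2
      subst this
      rfl
  let Fm : {z : TN R // (comp m R j z).isSome} →
      (Σ x : D, {z : TN R // comp m R j z = some x}) :=
    fun z => ⟨val z, ⟨z.1, hval z⟩⟩
  have hF : Function.Injective Fm := by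
    intro z z' h
    have : z.1 = z'.1 :=
      congrArg (fun p : (Σ x : D, {w : TN R // comp m R j w = some x}) => p.2.1) h
    exact Subtype.ext this
  refine ⟨fun z => G (Fm z), hG.comp hF, ?_⟩
  intro z x hx
  show val z = x
  have := (hval z).symm.trans hx
  exact Option.some_injective D this

lemma exists_perm_sum {α β : Type u} {P : β → Prop}
    (E : {z : β // P z} → α) (hE : Function.Injective E) :
    ∃ π : Equiv.Perm (α ⊕ β), ∀ z : {z : β // P z},
      π (Sum.inr z.1) = Sum.inl (E z) := by
  classical
  let G : α ⊕ β → α ⊕ β := fun y =>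
    match y with
    | Sum.inr z => if h : P z then Sum.inl (E ⟨z, h⟩) else Sum.inr z
    | Sum.inl w => if h : ∃ z, E z = w then Sum.inr (Classical.choose h).1
        else Sum.inl w
  have hG : Function.Involutive G := by
    intro y
    match y with
    | Sum.inr z =>
      by_cases h : P z
      · have h1 : G (Sum.inr z) = Sum.inl (E ⟨z, h⟩) := dif_pos h
        rw [h1]
        have hex : ∃ z', E z' = E ⟨z, h⟩ := ⟨⟨z, h⟩, rfl⟩
        have h2 : G (Sum.inl (E ⟨z, h⟩)) = Sum.inr (Classical.choose hex).1 :=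
          dif_pos hex
        rw [h2, hE (Classical.choose_spec hex)]
      · have h1 : G (Sum.inr z) = Sum.inr z := dif_neg h
        rw [h1, h1]
    | Sum.inl w =>
      by_cases h : ∃ z, E z = w
      · have h1 : G (Sum.inl w) = Sum.inr (Classical.choose h).1 := dif_pos h
        rw [h1]
        have hP : P (Classical.choose h).1 := (Classical.choose h).2
        have h2 : G (Sum.inr (Classical.choose h).1) =
            Sum.inl (E ⟨(Classical.choose h).1, hP⟩) := dif_pos hP
        rw [h2]
        congr 1
        rw [show (⟨(Classical.choose h).1, hP⟩ : {z : β // P z}) =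
          Classical.choose h from rfl]
        exact Classical.choose_spec h
      · have h1 : G (Sum.inl w) = Sum.inl w := dif_neg h
        rw [h1, h1]
  exact ⟨hG.toPerm G, fun z => by
    show G (Sum.inr z.1) = Sum.inl (E z)
    have : G (Sum.inr z.1) = Sum.inl (E ⟨z.1, z.2⟩) := dif_pos z.2
    simpa using this⟩

/-- The permutation interpreting `g`: rotate the `Fin (d+1)` component. -/
def gPerm : Equiv.Perm (Dom d R) :=
  Equiv.sumCongr (Equiv.prodCongr (Equiv.refl D) (Equiv.addRight (1 : Fin (d+1))))
    (Equiv.refl (TN R))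

lemma gPerm_symm_inl (c : D) (r : Fin (d+1)) :
    (gPerm d R).symm (Sum.inl (c, r)) = Sum.inl (c, r - 1) := by
  simp [gPerm, sub_eq_add_neg]

open Fin.NatCast in
lemma evalWord_replicate (fI : Option (Fin m) → Equiv.Perm (Dom d R))
    (hg : fI none = gPerm d R) (k : ℕ) (c : D) (r : Fin (d+1)) :
    evalWord fI (List.replicate k ((none : Option (Fin m)), false)) (Sum.inl (c, r))
      = Sum.inl (c, r - (k : Fin (d+1))) := by
  induction k with
  | zero => simp [evalWord]
  | succ k ih =>
    rw [List.replicate_succ]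
    show (fI none).symm _ = _
    rw [ih, hg, gPerm_symm_inl, sub_sub]
    norm_cast

lemma comp_castLE (ha : ∀ i, a i ≤ m) (i : Fin q) (t : Fin (a i) → D)
    (ht : t ∈ R i) (j : Fin (a i)) :
    comp m R (Fin.castLE (ha i) j) (⟨i, ⟨t, ht⟩⟩ : TN R) = some (t j) := by
  unfold comp
  have hj : ((Fin.castLE (ha i) j : Fin m) : ℕ) < a i := j.isLt
  rw [dif_pos hj]
  rfl

end Struct

end Sol

universe u

open PaperQE PaperDeg in
/-- Interpretation of a bounded degree structure into a
bijective structure. Fix the relational signature ρ (arities `a i ≤ m`) and a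
degree bound `d`. The target unary functional signature σ has monadic
predicate symbols `D̂, T_1, …, T_q` (indexed by `Option (Fin q)`, with `none`
for `D̂`), unary function symbols `g, f_1, …, f_m` (indexed by
`Option (Fin m)`, with `none` for `g`) and no constants. There is a
translation `Tr` of first-order ρ-formulas into first-order σ-formulas —
depending only on the formula, ρ and `d`, not on the structure — such that,
for every finite ρ-structure `S = ⟨D; R_1,…,R_q⟩` of degree at most `d`, there
are a bijective σ-structure `S'` with domain `D'` (every function symbol
interpreted as a permutation of `D'`) and an injection `ι : D ↪ D'` whose
image is the interpretation of `D̂`, such that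
(i) `card D' = (d+1) * card D + Σᵢ card (R i)`, and
(ii) for every ρ-formula `φ(x₁,…,x_p)`: every `p`-tuple of `D'` satisfying
`Tr φ` in `S'` lies in `(ι(D))^p`, and for all `(a₁,…,a_p) ∈ D^p`:
`S ⊨ φ(a₁,…,a_p)` iff `S' ⊨ (Tr φ)(ι(a₁),…,ι(a_p))`; that is, `φ(S)`
corresponds exactly to `(Tr φ)(S')` under `ι`. -/
theorem interpretation_bounded_degree {q : ℕ} {a : Fin q → ℕ} (m d : ℕ)
    (ha : ∀ i, a i ≤ m) :
    ∃ Tr : ∀ p : ℕ, RForm q a p → BForm Empty (Option (Fin q)) (Option (Fin m)) p,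
      ∀ (D : Type u) (_ : Fintype D) (_ : DecidableEq D)
        (R : ∀ i, Finset (Fin (a i) → D)), (∀ x : D, deg R x ≤ d) →
        ∃ (D' : Type u) (cI' : Empty → D')
          (uI' : Option (Fin q) → D' → Prop)
          (fI' : Option (Fin m) → Equiv.Perm D') (ι : D ↪ D'),
          Set.range ι = {y : D' | uI' none y} ∧
          Nat.card D' = (d + 1) * Nat.card D + ∑ i : Fin q, (R i).card ∧
          ∀ (p : ℕ) (φ : RForm q a p),
            (∀ b : Fin p → D',
              (Tr p φ).Sat cI' uI' fI' b → ∀ j : Fin p, b j ∈ Set.range ι) ∧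
            ∀ v : Fin p → D,
              φ.Sat R v ↔ (Tr p φ).Sat cI' uI' fI' (ι ∘ v) := by
  classical
  refine ⟨fun p φ => .and (Sol.bigAnd (List.ofFn fun j : Fin p => Sol.dhat j))
    (Sol.tr m d ha φ), ?_⟩
  intro D instF instD R hdeg
  letI := instF; letI := instD
  choose E hEinj hEfst using fun j : Fin m => Sol.exists_E m d R hdeg j
  choose fj hfj using fun j : Fin m => Sol.exists_perm_sum (E j) (hEinj j)
  let fI : Option (Fin m) → Equiv.Perm (Sol.Dom d R) :=
    fun o => Option.elim o (Sol.gPerm d R) fj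
  have hgnone : fI none = Sol.gPerm d R := rfl
  let uI : Option (Fin q) → Sol.Dom d R → Prop := fun o y =>
    match o with
    | none => ∃ x : D, y = Sum.inl (x, 0)
    | some i => ∃ t : {t : Fin (a i) → D // t ∈ R i}, y = Sum.inr ⟨i, t⟩
  let ι : D ↪ Sol.Dom d R :=
    ⟨fun x => Sum.inl (x, 0), fun x y h => by simpa using h⟩
  have hιval : ∀ x : D, ι x = Sum.inl (x, 0) := fun x => rfl
  have hrange : Set.range ι = {y : Sol.Dom d R | uI none y} := by
    ext y
    constructor
    · rintro ⟨x, rfl⟩; exact ⟨x, rfl⟩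
    · rintro ⟨x, rfl⟩; exact ⟨x, rfl⟩
  -- key facts about f_j on tuple nodes
  have hfjz : ∀ (j : Fin m) (z : Sol.TN R) (x : D), Sol.comp m R j z = some x →
      ∃ k : Fin (d+1), fj j (Sum.inr z) = Sum.inl (x, k) := by
    intro j z x hx
    have hzs : (Sol.comp m R j z).isSome := by rw [hx]; rfl
    refine ⟨(E j ⟨z, hzs⟩).2, ?_⟩
    rw [hfj j ⟨z, hzs⟩]
    congr 1
    exact Prod.ext (hEfst j ⟨z, hzs⟩ x hx) rfl
  open Fin.NatCast in
  have hword : ∀ (j : Fin m) (z : Sol.TN R) (x : D), Sol.comp m R j z = some x →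
      ∃ k₀ : Fin (d+1), ∀ k : ℕ,
        evalWord fI (Sol.wrd j k) (Sum.inr z)
          = Sum.inl (x, k₀ - (k : Fin (d+1))) := by
    intro j z x hx
    obtain ⟨k₀, hk₀⟩ := hfjz j z x hx
    refine ⟨k₀, fun k => ?_⟩
    rw [Sol.wrd, Sol.evalWord_append]
    have h1 : evalWord fI [((some j : Option (Fin m)), true)] (Sum.inr z)
        = fj j (Sum.inr z) := rfl
    rw [h1, hk₀, Sol.evalWord_replicate m d R fI hgnone]
  -- main induction
  have main : ∀ (n : ℕ) (φ : RForm q a n) (v : Fin n → D),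
      φ.Sat R v ↔ (Sol.tr m d ha φ).Sat Empty.elim uI fI (ι ∘ v) := by
    intro n φ
    induction φ with
    | @rel n i vs =>
      intro v
      constructor
      · intro hmem
        have hmem' : (fun j => v (vs j)) ∈ R i := hmem
        refine ⟨Sum.inr ⟨i, ⟨fun j => v (vs j), hmem'⟩⟩, ?_, ?_⟩
        · show uI (some i)
            ((Fin.snoc (ι ∘ v) (Sum.inr ⟨i, ⟨fun j => v (vs j), hmem'⟩⟩) : Fin (n+1) → Sol.Dom d R) (Fin.last n))
          rw [Fin.snoc_last]
          exact ⟨⟨_, hmem'⟩, rfl⟩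
        · rw [Sol.bigAnd_sat]
          intro ψ hψ
          obtain ⟨j, rfl⟩ := List.mem_ofFn.mp hψ
          rw [Sol.bigOr_sat]
          obtain ⟨k₀, hk₀⟩ := hword _ _ _ (Sol.comp_castLE m R ha i _ hmem' j)
          refine ⟨_, List.mem_map.mpr ⟨k₀.val, List.mem_range.mpr k₀.isLt, rfl⟩, ?_⟩
          show evalWord fI _
              ((Fin.snoc (ι ∘ v) (Sum.inr ⟨i, ⟨fun j => v (vs j), hmem'⟩⟩) : Fin (n+1) → Sol.Dom d R) (Fin.last n))
            = evalWord fI []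
              ((Fin.snoc (ι ∘ v) (Sum.inr ⟨i, ⟨fun j => v (vs j), hmem'⟩⟩) : Fin (n+1) → Sol.Dom d R)
                (Fin.castSucc (vs j)))
          rw [Fin.snoc_last, Fin.snoc_castSucc]
          rw [hk₀ k₀.val]
          show _ = ι (v (vs j))
          rw [Fin.cast_val_eq_self, sub_self]
          rfl
      · rintro ⟨y, hT, hbig⟩
        replace hT : uI (some i)
            ((Fin.snoc (ι ∘ v) y : Fin (n+1) → Sol.Dom d R) (Fin.last n)) := hT
        rw [Fin.snoc_last] at hT
        obtain ⟨⟨t, ht⟩, rfl⟩ := hT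
        show (fun j => v (vs j)) ∈ R i
        have hcomp : ∀ j : Fin (a i), t j = v (vs j) := by
          intro j
          rw [Sol.bigAnd_sat] at hbig
          have hb := hbig _ (List.mem_ofFn.mpr ⟨j, rfl⟩)
          rw [Sol.bigOr_sat] at hb
          obtain ⟨ψ, hψ, hsat⟩ := hb
          obtain ⟨k, _, rfl⟩ := List.mem_map.mp hψ
          replace hsat : evalWord fI (Sol.wrd (Fin.castLE (ha i) j) k)
              ((Fin.snoc (ι ∘ v) (Sum.inr ⟨i, ⟨t, ht⟩⟩) : Fin (n+1) → Sol.Dom d R)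
                (Fin.last n))
            = evalWord fI []
              ((Fin.snoc (ι ∘ v) (Sum.inr ⟨i, ⟨t, ht⟩⟩) : Fin (n+1) → Sol.Dom d R)
                (Fin.castSucc (vs j))) := hsat
          rw [Fin.snoc_last, Fin.snoc_castSucc] at hsat
          obtain ⟨k₀, hk₀⟩ := hword _ _ _ (Sol.comp_castLE m R ha i t ht j)
          rw [hk₀ k] at hsat
          replace hsat : Sum.inl (α := D × Fin (d+1)) (β := Sol.TN R)
              (t j, k₀ - (k : Fin (d+1))) = Sum.inl (v (vs j), 0) := hsat
          exact congrArg Prod.fst (Sum.inl_injective hsat)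
        have : t = fun j => v (vs j) := funext hcomp
        exact this ▸ ht
    | @eq n i j =>
      intro v
      show v i = v j ↔ evalWord fI [] ((ι ∘ v) i) = evalWord fI [] ((ι ∘ v) j)
      constructor
      · intro h
        exact congrArg (fun x => evalWord fI [] (ι x)) h
      · intro h
        exact ι.injective h
    | not φ ih => exact fun v => not_congr (ih v)
    | and φ ψ ihφ ihψ => exact fun v => and_congr (ihφ v) (ihψ v)
    | or φ ψ ihφ ihψ => exact fun v => or_congr (ihφ v) (ihψ v)
    | @ex n φ ih =>
      intro v
      constructor
      · rintro ⟨y, hy⟩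
        refine ⟨ι y, ?_, ?_⟩
        · show uI none ((Fin.snoc (ι ∘ v) (ι y) : Fin (n+1) → Sol.Dom d R) (Fin.last n))
          rw [Fin.snoc_last]
          exact ⟨y, rfl⟩
        · rw [← Fin.comp_snoc]
          exact (ih _).mp hy
      · rintro ⟨y', hd, hφ⟩
        replace hd : uI none
            ((Fin.snoc (ι ∘ v) y' : Fin (n+1) → Sol.Dom d R) (Fin.last n)) := hd
        rw [Fin.snoc_last] at hd
        obtain ⟨x, rfl⟩ := hd
        refine ⟨x, (ih _).mpr ?_⟩
        rw [Fin.comp_snoc]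
        exact hφ
    | @all n φ ih =>
      intro v
      constructor
      · intro h y'
        by_cases hy : uI none y'
        · right
          obtain ⟨x, rfl⟩ := hy
          rw [show (Sum.inl (x, 0) : Sol.Dom d R) = ι x from rfl, ← Fin.comp_snoc]
          exact (ih _).mp (h x)
        · left
          intro hc
          replace hc : uI none
              ((Fin.snoc (ι ∘ v) y' : Fin (n+1) → Sol.Dom d R) (Fin.last n)) := hc
          rw [Fin.snoc_last] at hc
          exact hy hc
      · intro h y
        rcases h (ι y) with hn | hs
        · exact absurd (show uI none
              ((Fin.snoc (ι ∘ v) (ι y) : Fin (n+1) → Sol.Dom d R) (Fin.last n)) by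
            rw [Fin.snoc_last]; exact ⟨y, rfl⟩) hn
        · refine (ih _).mpr ?_
          rw [Fin.comp_snoc]
          exact hs
  refine ⟨Sol.Dom d R, Empty.elim, uI, fI, ι, hrange, ?_, ?_⟩
  · rw [Nat.card_eq_fintype_card]
    rw [show Fintype.card (Sol.Dom d R)
        = Fintype.card (D × Fin (d+1)) + Fintype.card (Sol.TN R) from
      Fintype.card_sum]
    congr 1
    · rw [Fintype.card_prod, Fintype.card_fin, Nat.card_eq_fintype_card, mul_comm]
    · rw [show Fintype.card (Sol.TN R)
          = ∑ i : Fin q, Fintype.card {t : Fin (a i) → D // t ∈ R i} from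
        Fintype.card_sigma]
      exact Finset.sum_congr rfl fun i _ => Fintype.card_coe _
  · intro p φ
    constructor
    · intro b hb j
      obtain ⟨h1, _⟩ := hb
      rw [Sol.bigAnd_sat] at h1
      have h2 : uI none (b j) := h1 _ (List.mem_ofFn.mpr ⟨j, rfl⟩)
      rw [hrange]
      exact h2
    · intro v
      rw [main p φ v]
      constructor
      · intro h
        refine ⟨?_, h⟩
        rw [Sol.bigAnd_sat]
        intro ψ hψ
        obtain ⟨j, rfl⟩ := List.mem_ofFn.mp hψ
        exact ⟨v j, rfl⟩
      · rintro ⟨_, h⟩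
        exact h
end
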